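/- arXiv:1504.07406 — 13 statements merged into one kernel-verified Lean document; each statement's English description precedes it below -/
import Mathlib

section
/- Let A be a finite alphabet of size σ ≥ 5. There exists N such that for all n ≥ N, the expected length of the maximal unbordered factor of a uniformly random string of length n over A is at least 0.99·n, i.e. (1/σ^n) · Σ_{S ∈ A^n} b(S) ≥ 0.99·n. -/
open List Finset Filter

/-- `S` is unbordered: it has no nonempty proper prefix that is also a suffix. -/
def Unbordered {α : Type*} (S : List α) : Prop :=
  ∀ B : List α, B ≠ [] → B.length < S.length → B <+: S → ¬ B <:+ S

/-- The length of the maximal unbordered factor of `S`. -/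
noncomputable def muf {α : Type*} (S : List α) : ℕ :=
  sSup {k | ∃ F : List α, F <:+: S ∧ Unbordered F ∧ F.length = k}

/-!
A border of length `k` of a word of length `L` makes it `(L - k)`-periodic, so the word is
determined by its first `L - k` letters. Hence appending `t` uniformly random letters to a fixed
word `w` yields a bordered word with probability at most
`∑_{k ≥ 1} σ⁻ᵏ + (|w| + t) σ⁻ᵗ ≤ 1/4 + 1/4` once `σ ≥ 5` and `4 (|w| + t) ≤ σᵗ`.
Conditioning successively on the prefixes of lengths `m + t, m + 2t, …, m + Kt` of a random word
of length `n = m + Kt`, all of them are bordered with probability at most `2⁻ᴷ`; otherwise one of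
them is an unbordered factor of length at least `m + t`. With `K = 8` and `t ≈ n / 2000` this gives
`E[b] ≥ (1 - 2⁻⁸) (n - 7t) ≥ 0.99 n`.
-/

namespace List

variable {α : Type*}

theorem getElem_eq_getElem_sub_of_take_eq_drop {S : List α} {k p j : ℕ}
    (h : S.take k = S.drop p) (hp : p ≤ j) (hj : j < S.length) : S[j] = S[j - p] := by
  have hlen : j - p < (S.drop p).length := by simp; omega
  calc S[j] = (S.drop p)[j - p] := by simp only [getElem_drop]; congr 1; omega
    _ = (S.take k)[j - p]'(h ▸ hlen) := by simp only [h]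
    _ = S[j - p] := getElem_take

theorem eq_of_take_eq_of_take_eq_drop {S T : List α} {k p : ℕ} (hlen : S.length = T.length)
    (hp : 0 < p) (hS : S.take k = S.drop p) (hT : T.take k = T.drop p)
    (hST : S.take p = T.take p) : S = T := by
  refine ext_getElem hlen fun j hjS hjT => ?_
  induction j using Nat.strong_induction_on with
  | _ j ih =>
    by_cases hj : j < p
    · simpa [hj, hjS, hjT] using congrArg (·[j]?) hST
    · rw [getElem_eq_getElem_sub_of_take_eq_drop hS (by omega) hjS,
        getElem_eq_getElem_sub_of_take_eq_drop hT (by omega) hjT]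
      exact ih _ (by omega) _ _

end List

theorem sum_Ico_pow_sub_le {x : ℝ} (hx : 1 < x) (t L : ℕ) :
    ∑ k ∈ Finset.Ico 1 L, x ^ (t - k) ≤ x ^ t / (x - 1) + L := by
  have hterm : ∀ k, x ^ (t - k) ≤ x ^ t * x⁻¹ ^ k + 1 := by
    intro k
    rcases le_total k t with hkt | htk
    · rw [pow_sub₀ x (by positivity) hkt, inv_pow]
      linarith
    · rw [Nat.sub_eq_zero_of_le htk, pow_zero]
      have : 0 ≤ x ^ t * x⁻¹ ^ k := by positivity
      linarith
  have hgeom : ∑ k ∈ Finset.Ico 1 L, x⁻¹ ^ k ≤ 1 / (x - 1) := by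
    refine (geom_sum_Ico_le_of_lt_one (by positivity) (inv_lt_one_of_one_lt₀ hx)).trans_eq ?_
    field_simp
  calc ∑ k ∈ Finset.Ico 1 L, x ^ (t - k)
      ≤ ∑ k ∈ Finset.Ico 1 L, (x ^ t * x⁻¹ ^ k + 1) := Finset.sum_le_sum fun k _ => hterm k
    _ = x ^ t * ∑ k ∈ Finset.Ico 1 L, x⁻¹ ^ k + (L - 1 : ℕ) := by
      simp [sum_add_distrib, mul_sum]
    _ ≤ x ^ t * (1 / (x - 1)) + L := by gcongr; exact_mod_cast Nat.sub_le L 1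
    _ = x ^ t / (x - 1) + L := by rw [mul_one_div]

section Unbordered

open scoped Classical

variable {α : Type*}

theorem length_le_muf {F S : List α} (hFS : F <:+: S) (hF : Unbordered F) :
    F.length ≤ muf S :=
  le_csSup ⟨S.length, fun _ ⟨_, hGS, _, hG⟩ => hG ▸ hGS.length_le⟩ ⟨F, hFS, hF, rfl⟩

theorem exists_take_eq_drop_of_not_unbordered {S : List α} (hS : ¬ Unbordered S) :
    ∃ k, 0 < k ∧ k < S.length ∧ S.take k = S.drop (S.length - k) := by
  simp only [Unbordered, not_forall, not_not] at hS
  obtain ⟨B, hB, hBS, hpre, hsuf⟩ := hS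
  refine ⟨B.length, length_pos_iff.2 hB, hBS, ?_⟩
  rw [← prefix_iff_eq_take.1 hpre, ← suffix_iff_eq_drop.1 hsuf]

theorem card_take_eq_drop_append_le [Fintype α] (w : List α) {t k : ℕ}
    (hk : k < w.length + t) :
    #{u : Fin t → α | (w ++ ofFn u).take k = (w ++ ofFn u).drop (w.length + t - k)} ≤
      Fintype.card α ^ (t - k) := by
  rw [← Fintype.card_fin (t - k), ← Fintype.card_fun, ← card_univ]
  refine card_le_card_of_injOn (Fin.take (t - k) (Nat.sub_le t k))
    (fun _ _ => mem_coe.2 (mem_univ _)) fun u hu v hv huv => ?_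
  have hlen : ∀ u : Fin t → α, (w ++ ofFn u).length = w.length + t := by simp
  have htake : (w ++ ofFn u).take (w.length + t - k) = (w ++ ofFn v).take (w.length + t - k) := by
    have := congrArg List.ofFn huv
    simp only [Fin.ofFn_take_eq_take_ofFn] at this
    simp only [take_append, show w.length + t - k - w.length = t - k by omega, this]
  have := eq_of_take_eq_of_take_eq_drop (by simp) (by omega) (by simpa [hlen] using hu)
    (by simpa [hlen] using hv) htake
  exact ofFn_injective (append_cancel_left this)

theorem card_not_unbordered_append_le [Fintype α] (hα : 1 < Fintype.card α) (w : List α)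
    (t : ℕ) :
    (#{u : Fin t → α | ¬ Unbordered (w ++ ofFn u)} : ℝ) ≤
      Fintype.card α ^ t / (Fintype.card α - 1) + (w.length + t) := by
  have hsub : ({u | ¬ Unbordered (w ++ ofFn u)} : Finset (Fin t → α)) ⊆
      (Finset.Ico 1 (w.length + t)).biUnion
        fun k => {u | (w ++ ofFn u).take k = (w ++ ofFn u).drop (w.length + t - k)} := by
    intro u hu
    obtain ⟨k, hk0, hkL, hk⟩ := exists_take_eq_drop_of_not_unbordered (Finset.mem_filter.1 hu).2
    simp only [length_append, length_ofFn] at hkL hk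
    exact mem_biUnion.2 ⟨k, Finset.mem_Ico.2 ⟨hk0, hkL⟩, Finset.mem_filter.2 ⟨mem_univ _, hk⟩⟩
  have hcard : #{u : Fin t → α | ¬ Unbordered (w ++ ofFn u)} ≤
      ∑ k ∈ Finset.Ico 1 (w.length + t), Fintype.card α ^ (t - k) :=
    (card_le_card hsub).trans <| card_biUnion_le.trans <|
      Finset.sum_le_sum fun k hk => card_take_eq_drop_append_le w (Finset.mem_Ico.1 hk).2
  calc (#{u : Fin t → α | ¬ Unbordered (w ++ ofFn u)} : ℝ)
      ≤ ∑ k ∈ Finset.Ico 1 (w.length + t), (Fintype.card α : ℝ) ^ (t - k) := by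
        exact_mod_cast hcard
    _ ≤ _ := by
      simpa using sum_Ico_pow_sub_le (x := Fintype.card α) (by exact_mod_cast hα) t (w.length + t)

def PrefixesBordered (m t K : ℕ) (S : List α) : Prop :=
  ∀ j, 1 ≤ j → j ≤ K → ¬ Unbordered (S.take (m + j * t))

theorem prefixesBordered_succ_append_iff {m t K : ℕ} {w u : List α}
    (hw : w.length = m + K * t) (hu : u.length = t) :
    PrefixesBordered m t (K + 1) (w ++ u) ↔
      PrefixesBordered m t K w ∧ ¬ Unbordered (w ++ u) := by
  have htake : ∀ j ≤ K, (w ++ u).take (m + j * t) = w.take (m + j * t) := fun j hj =>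
    take_append_of_le_length (hw ▸ by gcongr)
  have hfull : (w ++ u).take (m + (K + 1) * t) = w ++ u :=
    take_of_length_le (by simp [hw, hu]; nlinarith)
  constructor
  · intro h
    exact ⟨fun j hj hjK => htake j hjK ▸ h j hj (by omega), hfull ▸ h (K + 1) (by omega) le_rfl⟩
  · rintro ⟨h, hwu⟩ j hj hjK
    rcases Nat.lt_or_eq_of_le hjK with hjK | rfl
    · exact htake j (by omega) ▸ h j hj (by omega)
    · rwa [hfull]

theorem card_filter_ofFn_append [Fintype α] (Q : List α → Prop) (m t : ℕ) :
    #{f : Fin (m + t) → α | Q (ofFn f)} =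
      ∑ w : Fin m → α, #{u : Fin t → α | Q (ofFn w ++ ofFn u)} := by
  simp only [Finset.card_filter]
  rw [← Fintype.sum_prod_type', ← (Fin.appendEquiv m t).sum_comp]
  simp only [← ofFn_fin_append]
  rfl

theorem card_prefixesBordered_le [Fintype α] {q : ℝ} (hq : 0 ≤ q) {m t : ℕ} (K : ℕ)
    (hstep : ∀ w : List α, w.length + t ≤ m + K * t →
      (#{u : Fin t → α | ¬ Unbordered (w ++ ofFn u)} : ℝ) ≤ q * Fintype.card α ^ t) :
    (#{f : Fin (m + K * t) → α | PrefixesBordered m t K (ofFn f)} : ℝ) ≤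
      q ^ K * Fintype.card α ^ (m + K * t) := by
  induction K with
  | zero =>
    simpa using (Nat.cast_le (α := ℝ)).2 <|
      card_filter_le (univ : Finset (Fin (m + 0 * t) → α)) fun f => PrefixesBordered m t 0 (ofFn f)
  | succ K ih =>
    rw [show m + (K + 1) * t = m + K * t + t by ring, card_filter_ofFn_append]
    have hsplit : ∀ w : Fin (m + K * t) → α,
        #{u : Fin t → α | PrefixesBordered m t (K + 1) (ofFn w ++ ofFn u)} =
          if PrefixesBordered m t K (ofFn w) then
            #{u : Fin t → α | ¬ Unbordered (ofFn w ++ ofFn u)}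
          else 0 := by
      intro w
      simp_rw [prefixesBordered_succ_append_iff (length_ofFn (f := w)) (length_ofFn (f := _))]
      split_ifs with hw <;> simp [hw]
    have hbad := ih fun w hw => hstep w (by nlinarith)
    calc ((∑ w : Fin (m + K * t) → α,
          #{u : Fin t → α | PrefixesBordered m t (K + 1) (ofFn w ++ ofFn u)} : ℕ) : ℝ)
        = ∑ w with PrefixesBordered m t K (ofFn w),
            (#{u : Fin t → α | ¬ Unbordered (ofFn w ++ ofFn u)} : ℝ) := by
          simp only [hsplit, Finset.sum_filter]; push_cast; rfl
      _ ≤ ∑ w with PrefixesBordered m t K (ofFn w), q * (Fintype.card α : ℝ) ^ t :=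
          Finset.sum_le_sum fun w _ => hstep _ (by simp; nlinarith)
      _ = #{w : Fin (m + K * t) → α | PrefixesBordered m t K (ofFn w)} *
            (q * Fintype.card α ^ t) := by
          rw [sum_const, nsmul_eq_mul]
      _ ≤ q ^ K * Fintype.card α ^ (m + K * t) * (q * Fintype.card α ^ t) := by gcongr
      _ = q ^ (K + 1) * Fintype.card α ^ (m + K * t + t) := by ring

theorem card_not_prefixesBordered_mul_le_sum_muf [Fintype α] (m t K : ℕ) :
    (m + t) * #{f : Fin (m + K * t) → α | ¬ PrefixesBordered m t K (ofFn f)} ≤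
      ∑ f : Fin (m + K * t) → α, muf (ofFn f) := by
  rw [mul_comm, ← smul_eq_mul, ← sum_const]
  refine (Finset.sum_le_sum fun f hf => ?_).trans
    (Finset.sum_le_sum_of_subset (filter_subset _ univ))
  simp only [PrefixesBordered, not_forall, not_not, Finset.mem_filter] at hf
  obtain ⟨-, j, hj, hjK, hu⟩ := hf
  have hlen : ((ofFn f).take (m + j * t)).length = m + j * t := by
    simp only [length_take, length_ofFn]
    exact min_eq_left (by gcongr)
  calc m + t ≤ m + j * t := by nlinarith
    _ ≤ muf (ofFn f) := hlen ▸ length_le_muf (take_prefix _ _).isInfix hu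

theorem le_expected_muf [Fintype α] (hα : 5 ≤ Fintype.card α) {n m t K : ℕ}
    (hn : n = m + K * t) (ht : 4 * n ≤ Fintype.card α ^ t) :
    (1 - (1 / 2) ^ K) * (m + t) ≤
      1 / (Fintype.card α : ℝ) ^ n * ∑ f : Fin n → α, (muf (ofFn f) : ℝ) := by
  subst hn
  set σ := Fintype.card α
  have hσ : (5 : ℝ) ≤ σ := by exact_mod_cast hα
  have hσt : (4 * (m + K * t) : ℝ) ≤ σ ^ t := by exact_mod_cast ht
  have hstep : ∀ w : List α, w.length + t ≤ m + K * t →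
      (#{u : Fin t → α | ¬ Unbordered (w ++ ofFn u)} : ℝ) ≤ 1 / 2 * σ ^ t := by
    intro w hw
    have hwR : (w.length + t : ℝ) ≤ m + K * t := by exact_mod_cast hw
    have hgeom : (σ : ℝ) ^ t / (σ - 1) ≤ σ ^ t / 4 :=
      div_le_div_of_nonneg_left (by positivity) (by norm_num) (by linarith)
    linarith [card_not_unbordered_append_le (by omega) w t]
  have hbad := card_prefixesBordered_le (by norm_num) K hstep
  have hgood := card_not_prefixesBordered_mul_le_sum_muf (α := α) m t K
  have hsplit : (#{f : Fin (m + K * t) → α | PrefixesBordered m t K (ofFn f)} : ℝ) +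
      #{f : Fin (m + K * t) → α | ¬ PrefixesBordered m t K (ofFn f)} = σ ^ (m + K * t) := by
    exact_mod_cast (card_filter_add_card_filter_not (s := univ) _).trans (by simp [σ])
  rw [div_mul_eq_mul_div, one_mul, le_div_iff₀ (by positivity)]
  calc (1 - (1 / 2) ^ K) * (m + t) * (σ : ℝ) ^ (m + K * t)
      = (m + t) * ((σ : ℝ) ^ (m + K * t) - (1 / 2) ^ K * σ ^ (m + K * t)) := by ring
    _ ≤ (m + t) * (#{f : Fin (m + K * t) → α | ¬ PrefixesBordered m t K (ofFn f)} : ℝ) := by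
      gcongr
      linarith
    _ ≤ ∑ f : Fin (m + K * t) → α, (muf (ofFn f) : ℝ) := by exact_mod_cast hgood

end Unbordered

theorem expected_muf_ge_099 (σ : ℕ) (hσ : 5 ≤ σ) :
    ∃ N : ℕ, ∀ n : ℕ, N ≤ n →
      (1 / (σ : ℝ) ^ n) * ∑ f : Fin n → Fin σ, (muf (List.ofFn f) : ℝ) ≥ 0.99 * n := by
  refine ⟨24000, fun n hn => ?_⟩
  obtain ⟨t, ht⟩ : ∃ t, t = n / 2000 + 1 := ⟨_, rfl⟩
  have hpow : 4 * n ≤ σ ^ t := calc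
    4 * n ≤ 2 ^ 13 * t := by omega
    _ ≤ 2 ^ 13 * 2 ^ t := by gcongr; exact Nat.lt_two_pow_self.le
    _ ≤ 4 ^ t := by rw [← pow_add, show 4 = 2 ^ 2 by rfl, ← pow_mul]; gcongr <;> omega
    _ ≤ σ ^ t := by gcongr; omega
  have key := le_expected_muf (α := Fin σ) (by simpa) (show n = (n - 8 * t) + 8 * t by omega)
    (by simpa)
  have htR : (t : ℝ) ≤ n / 2000 + 1 := by
    rw [ht]; push_cast; linarith [Nat.cast_div_le (α := ℝ) (m := n) (n := 2000)]
  have hnR : (24000 : ℝ) ≤ n := by exact_mod_cast hn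
  push_cast [show 8 * t ≤ n by omega, Fintype.card_fin] at key
  norm_num at key ⊢
  linarith
end

section
/- For every alphabet size σ ≥ 2 and every i ≥ 1, the number of unbordered strings satisfies b(i+1, σ) ≤ σ · b(i, σ); equivalently, the sequence b(i, σ)/σ^i is monotonically nonincreasing in i. -/
/-!
Inserting a letter right after the shortest border `u` of a bordered word `w = u v` gives a
bordered word `u c v` whose shortest border is still `u`: the shortest border is unbordered, so
it cannot overlap itself and `|u| ≤ |v|`, whence the short suffixes of `w` and of `u c v` are the
same. The map `(c, w) ↦ u c v` can therefore be inverted by locating the shortest border again, so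
the bordered words of length `i + 1` are at least `σ` times as many as those of length `i`; passing
to complements in `σ ^ (i + 1) = σ · σ ^ i` gives the bound on unbordered words.
-/

open List Finset Filter

/-- `unbCount σ i` : the number of unbordered strings of length `i` over an alphabet
of size `σ`. -/
noncomputable def unbCount (σ i : ℕ) : ℕ :=
  Nat.card {f : Fin i → Fin σ // Unbordered (List.ofFn f)}

namespace List

variable {α : Type*}

theorem insertIdx_eq_take_append_cons_drop {l : List α} {k : ℕ} (hk : k ≤ l.length) (a : α) :
    l.insertIdx k a = l.take k ++ a :: l.drop k := by
  conv_lhs => rw [← l.take_append_drop k]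
  simpa [insertIdx, length_take_of_le hk] using
    modifyTailIdx_add (cons a) 0 (l.take k) (l.drop k)

theorem suffix_insertIdx_iff {l s : List α} {k : ℕ} (a : α) (hs : s.length + k ≤ l.length) :
    s <:+ l.insertIdx k a ↔ s <:+ l := by
  have hdrop : l.drop k <:+ l.insertIdx k a := by
    rw [insertIdx_eq_take_append_cons_drop (by omega)]
    exact ((l.drop k).suffix_cons a).trans (suffix_append _ _)
  have hlen : s.length ≤ (l.drop k).length := by simp; omega
  exact ⟨fun h => (suffix_of_suffix_length_le h hdrop hlen).trans (l.drop_suffix k),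
    fun h => (suffix_of_suffix_length_le h (l.drop_suffix k) hlen).trans hdrop⟩

end List

section Border

variable {α : Type*}

def IsBorderLength (w : List α) (k : ℕ) : Prop :=
  0 < k ∧ k < w.length ∧ w.take k <:+ w

theorem isBorderLength_length {B w : List α} (hB : B ≠ []) (hlt : B.length < w.length)
    (hp : B <+: w) (hs : B <:+ w) : IsBorderLength w B.length :=
  ⟨length_pos_iff.mpr hB, hlt, prefix_iff_eq_take.mp hp ▸ hs⟩

theorem not_unbordered_iff_exists_isBorderLength {w : List α} :
    ¬ Unbordered w ↔ ∃ k, IsBorderLength w k := by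
  constructor
  · intro h
    simp only [Unbordered, not_forall, not_not] at h
    obtain ⟨B, hB, hlt, hp, hs⟩ := h
    exact ⟨B.length, isBorderLength_length hB hlt hp hs⟩
  · rintro ⟨k, hk, hlt, hs⟩ h
    have hlen : (w.take k).length = k := length_take_of_le hlt.le
    exact h (w.take k) (ne_nil_of_length_pos (by omega)) (by omega) (w.take_prefix k) hs

theorem Unbordered.two_mul_length_le {u w : List α} (hu : Unbordered u) (hp : u <+: w)
    (hs : u <:+ w) (hlt : u.length < w.length) : 2 * u.length ≤ w.length := by
  by_contra! hover
  obtain ⟨t, rfl⟩ := hs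
  simp only [length_append] at hover hlt
  -- the two occurrences of `u` in `t ++ u` overlap, and the overlap is a border of `u`
  have hu_eq : u = t ++ u.take (u.length - t.length) := by
    conv_lhs => rw [prefix_iff_eq_take.mp hp, take_append, take_of_length_le (by omega)]
  refine hu (u.take (u.length - t.length)) (ne_nil_of_length_pos (by simp; omega))
    (by simp; omega) (u.take_prefix _) ⟨t, hu_eq.symm⟩

noncomputable def shortestBorderLength (w : List α) : ℕ :=
  sInf {k | IsBorderLength w k}

section ShortestBorder

variable {w : List α}

theorem isBorderLength_shortestBorderLength (h : ¬ Unbordered w) :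
    IsBorderLength w (shortestBorderLength w) :=
  Nat.sInf_mem (not_unbordered_iff_exists_isBorderLength.mp h)

theorem shortestBorderLength_le {k : ℕ} (hk : IsBorderLength w k) : shortestBorderLength w ≤ k :=
  Nat.sInf_le hk

theorem unbordered_take_shortestBorderLength (h : ¬ Unbordered w) :
    Unbordered (w.take (shortestBorderLength w)) := by
  obtain ⟨-, hlt, hs⟩ := isBorderLength_shortestBorderLength h
  intro B hB hBlt hp hs'
  have hBlt' : B.length < shortestBorderLength w := by simpa [hlt.le] using hBlt
  have := shortestBorderLength_le <|
    isBorderLength_length hB (by omega) (hp.trans (w.take_prefix _)) (hs'.trans hs)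
  omega

theorem two_mul_shortestBorderLength_le (h : ¬ Unbordered w) :
    2 * shortestBorderLength w ≤ w.length := by
  obtain ⟨-, hlt, hs⟩ := isBorderLength_shortestBorderLength h
  simpa [hlt.le] using (unbordered_take_shortestBorderLength h).two_mul_length_le
    (w.take_prefix _) hs (by simpa using hlt)

theorem isBorderLength_insertIdx_iff {k m : ℕ} (c : α) (hmk : m ≤ k) (hm : m + k ≤ w.length) :
    IsBorderLength (w.insertIdx k c) m ↔ IsBorderLength w m := by
  have hlen : (w.insertIdx k c).length = w.length + 1 :=
    length_insertIdx_of_le_length (by omega) c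
  rw [IsBorderLength, IsBorderLength, hlen, take_insertIdx_eq_take_of_le _ _ _ _ hmk,
    suffix_insertIdx_iff c (by simp; omega)]
  exact and_congr_right fun _ => and_congr_left fun _ => by omega

theorem isBorderLength_insertIdx_shortestBorderLength (h : ¬ Unbordered w) (c : α) :
    IsBorderLength (w.insertIdx (shortestBorderLength w) c) (shortestBorderLength w) :=
  (isBorderLength_insertIdx_iff c le_rfl (by have := two_mul_shortestBorderLength_le h; omega)).mpr
    (isBorderLength_shortestBorderLength h)

theorem shortestBorderLength_insertIdx_shortestBorderLength (h : ¬ Unbordered w) (c : α) :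
    shortestBorderLength (w.insertIdx (shortestBorderLength w) c) = shortestBorderLength w := by
  set k := shortestBorderLength w
  have hk := isBorderLength_insertIdx_shortestBorderLength h c
  have hle : shortestBorderLength (w.insertIdx k c) ≤ k := shortestBorderLength_le hk
  refine le_antisymm hle (shortestBorderLength_le ?_)
  refine (isBorderLength_insertIdx_iff c hle ?_).mp
    (isBorderLength_shortestBorderLength (not_unbordered_iff_exists_isBorderLength.mpr ⟨k, hk⟩))
  have := two_mul_shortestBorderLength_le h
  omega

end ShortestBorder

theorem eq_of_insertIdx_shortestBorderLength_eq {w w' : List α} {c c' : α}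
    (hw : ¬ Unbordered w) (hw' : ¬ Unbordered w')
    (h : w.insertIdx (shortestBorderLength w) c = w'.insertIdx (shortestBorderLength w') c') :
    c = c' ∧ w = w' := by
  have hk : shortestBorderLength w = shortestBorderLength w' := by
    rw [← shortestBorderLength_insertIdx_shortestBorderLength hw c, h,
      shortestBorderLength_insertIdx_shortestBorderLength hw' c']
  rw [hk] at h
  have hww' : w = w' := by simpa using congrArg (eraseIdx · (shortestBorderLength w')) h
  subst hww'
  have hle : shortestBorderLength w ≤ w.length := (isBorderLength_shortestBorderLength hw).2.1.le
  simpa [getElem?_insertIdx_self, ← hk, hle] using congrArg (·[shortestBorderLength w]?) h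

end Border

theorem ncard_length_eq (α : Type*) [Finite α] (n : ℕ) :
    {w : List α | w.length = n}.ncard = Nat.card α ^ n := by
  rw [← Nat.card_coe_set_eq]
  exact (Nat.card_congr (Equiv.vectorEquivFin α n)).trans (by rw [Nat.card_fun, Nat.card_fin])

theorem ncard_unbordered_add_ncard_bordered (α : Type*) [Finite α] (n : ℕ) :
    {w : List α | w.length = n ∧ Unbordered w}.ncard
      + {w : List α | w.length = n ∧ ¬ Unbordered w}.ncard = Nat.card α ^ n := by
  rw [← ncard_length_eq]
  exact Set.ncard_inter_add_ncard_sdiff_eq_ncard _ _ (finite_length_eq α n)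

theorem card_mul_ncard_bordered_le (α : Type*) [Finite α] (n : ℕ) :
    Nat.card α * {w : List α | w.length = n ∧ ¬ Unbordered w}.ncard
      ≤ {w : List α | w.length = n + 1 ∧ ¬ Unbordered w}.ncard := by
  rw [← Set.ncard_univ, ← Set.ncard_prod]
  refine Set.ncard_le_ncard_of_injOn (fun p => p.2.insertIdx (shortestBorderLength p.2) p.1)
    ?_ ?_ ((finite_length_eq α (n + 1)).subset fun _ hw => hw.1)
  · rintro ⟨c, w⟩ ⟨-, hn, hw⟩
    refine ⟨?_, not_unbordered_iff_exists_isBorderLength.mpr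
      ⟨_, isBorderLength_insertIdx_shortestBorderLength hw c⟩⟩
    rw [length_insertIdx_of_le_length (isBorderLength_shortestBorderLength hw).2.1.le, hn]
  · rintro ⟨c, w⟩ ⟨-, -, hw⟩ ⟨c', w'⟩ ⟨-, -, hw'⟩ h
    obtain ⟨rfl, rfl⟩ := eq_of_insertIdx_shortestBorderLength_eq hw hw' h
    rfl

theorem ncard_unbordered_succ_le (α : Type*) [Finite α] (n : ℕ) :
    {w : List α | w.length = n + 1 ∧ Unbordered w}.ncard
      ≤ Nat.card α * {w : List α | w.length = n ∧ Unbordered w}.ncard := by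
  have hsucc := ncard_unbordered_add_ncard_bordered α (n + 1)
  rw [pow_succ', ← ncard_unbordered_add_ncard_bordered α n, mul_add] at hsucc
  have := card_mul_ncard_bordered_le α n
  omega

theorem unbCount_eq_ncard (σ n : ℕ) :
    unbCount σ n = {w : List (Fin σ) | w.length = n ∧ Unbordered w}.ncard := by
  rw [unbCount, ← Nat.card_coe_set_eq]
  refine Nat.card_congr <| ((Equiv.vectorEquivFin (Fin σ) n).symm.subtypeEquiv ?_).trans
    (Equiv.subtypeSubtypeEquivSubtypeInter (fun w : List (Fin σ) => w.length = n) Unbordered)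
  intro f
  rw [← List.Vector.toList_ofFn]
  rfl

theorem unbCount_ratio_antitone_general (σ i : ℕ) :
    unbCount σ (i + 1) ≤ σ * unbCount σ i := by
  simpa [unbCount_eq_ncard] using ncard_unbordered_succ_le (Fin σ) i

theorem unbCount_ratio_antitone (σ i : ℕ) (hσ : 2 ≤ σ) (hi : 1 ≤ i) :
    unbCount σ (i + 1) ≤ σ * unbCount σ i :=
  unbCount_ratio_antitone_general σ i
end

section
/- For every alphabet size σ ≥ 2, the sequence b(i, σ)/σ^i converges as i → ∞ to a limit α, and this limit satisfies α ≥ 1 − σ^{−1} − σ^{−2}. -/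
open List Finset Filter

/-- `f` has a border of length `k`, pointwise. -/
def Brd {n σ : ℕ} (f : Fin n → Fin σ) (k : ℕ) : Prop :=
  0 < k ∧ k < n ∧ ∀ i j : Fin n, (i : ℕ) < k → (j : ℕ) = n - k + i → f i = f j

lemma brd_iff {n σ : ℕ} (f : Fin n → Fin σ) (k : ℕ) :
    Brd f k ↔ ∃ B : List (Fin σ), B.length = k ∧ B ≠ [] ∧ B.length < n ∧
      B <+: List.ofFn f ∧ B <:+ List.ofFn f := by
  constructor
  · rintro ⟨hk, hkn, hb⟩
    refine ⟨(List.ofFn f).take k, by simp [Nat.min_eq_left hkn.le], ?_, ?_, take_prefix _ _, ?_⟩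
    · intro h
      have := congrArg List.length h
      simp [Nat.min_eq_left hkn.le] at this
      omega
    · simp [Nat.min_eq_left hkn.le]; omega
    · have : (List.ofFn f).take k = (List.ofFn f).drop (n - k) := by
        apply List.ext_getElem
        · simp; omega
        · intro i h1 h2
          rw [List.getElem_take, List.getElem_drop]
          have hi : i < k := by simpa [Nat.min_eq_left hkn.le] using h1
          rw [List.getElem_ofFn, List.getElem_ofFn]
          exact hb _ _ hi (by simp)
      rw [this]
      exact drop_suffix _ _
  · rintro ⟨B, rfl, hne, hlt, hpre, hsuf⟩
    have hlt' : B.length < n := by simpa using hlt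
    refine ⟨List.length_pos_iff.mpr hne, hlt', ?_⟩
    intro i j hi hj
    have hp := List.prefix_iff_eq_take.mp hpre
    have hs := List.suffix_iff_eq_drop.mp hsuf
    have h1 : f i = B[(i : ℕ)]'(by omega) := by
      rw [List.getElem_of_eq hp (by omega), List.getElem_take, List.getElem_ofFn]
    have h2 : f j = B[(i : ℕ)]'(by omega) := by
      rw [List.getElem_of_eq hs (by omega), List.getElem_drop, List.getElem_ofFn]
      congr 1
      apply Fin.ext
      simp only [length_ofFn, Fin.val_mk]
      omega
    rw [h1, h2]

lemma unbordered_ofFn_iff {n σ : ℕ} (f : Fin n → Fin σ) :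
    Unbordered (List.ofFn f) ↔ ∀ k, ¬ Brd f k := by
  constructor
  · intro hu k hb
    rw [brd_iff] at hb
    obtain ⟨B, _, hne, hlt, hpre, hsuf⟩ := hb
    exact hu B hne (by simpa using hlt) hpre hsuf
  · intro h B hne hlt hpre hsuf
    exact h B.length ((brd_iff f B.length).mpr ⟨B, rfl, hne, by simpa using hlt, hpre, hsuf⟩)

/-- If `f` has a long border, it has a shorter one. -/
lemma brd_shorten {n σ : ℕ} (f : Fin n → Fin σ) (k : ℕ) (hb : Brd f k) (h2 : n < 2 * k) :
    Brd f (2 * k - n) := by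
  obtain ⟨hk, hkn, hb⟩ := hb
  refine ⟨by omega, by omega, ?_⟩
  intro i j hi hj
  -- i < 2k - n ; j = n - (2k-n) + i = 2(n-k) + i
  have e1 : f i = f ⟨n - k + i, by omega⟩ := hb i ⟨n - k + i, by omega⟩ (by omega) (by simp)
  have e2 : f ⟨n - k + i, by omega⟩ = f ⟨n - k + (n - k + i), by omega⟩ :=
    hb ⟨n - k + i, by omega⟩ ⟨n - k + (n - k + i), by omega⟩ (by simp; omega) (by simp)
  rw [e1, e2]
  congr 1
  apply Fin.ext
  simp only [Fin.val_mk]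
  omega

/-- Transfer of borders of length `j < k` between `f` and its length-`k` prefix,
when `f` has a border of length `k` with `2*k ≤ n`. -/
lemma brd_transfer {n σ k : ℕ} (f : Fin n → Fin σ) (hkn : 2 * k ≤ n) (hb : Brd f k)
    (j : ℕ) (hj : j < k) :
    Brd (fun i : Fin k => f ⟨i, by omega⟩) j ↔ Brd f j := by
  obtain ⟨hk0, hkn', hb⟩ := hb
  have per : ∀ i : ℕ, (h : i < k) → f ⟨i, by omega⟩ = f ⟨n - k + i, by omega⟩ := by
    intro i h
    exact hb ⟨i, by omega⟩ ⟨n - k + i, by omega⟩ (by simpa) (by simp)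
  constructor
  · rintro ⟨hj0, hjk, hg⟩
    refine ⟨hj0, by omega, ?_⟩
    intro i j' hi hj'
    have e1 : f i = f ⟨k - j + (i : ℕ), by omega⟩ := by
      have := hg ⟨i, by omega⟩ ⟨k - j + (i : ℕ), by omega⟩ (by simpa) (by simp)
      simpa using this
    have e2 : f ⟨k - j + (i : ℕ), by omega⟩ = f ⟨n - k + (k - j + (i : ℕ)), by omega⟩ :=
      per _ (by omega)
    rw [e1, e2]
    congr 1
    apply Fin.ext
    simp only [Fin.val_mk]
    omega
  · rintro ⟨hj0, hjn, hf⟩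
    refine ⟨hj0, hj, ?_⟩
    intro i j' hi hj'
    -- g i = f i, g j' = f (k - j + i); need f i = f (k - j + i)
    have e1 : f ⟨(i : ℕ), by omega⟩ = f ⟨n - j + (i : ℕ), by omega⟩ :=
      hf ⟨(i : ℕ), by omega⟩ ⟨n - j + (i : ℕ), by omega⟩ (by simpa) (by simp)
    have e2 : f ⟨k - j + (i : ℕ), by omega⟩ = f ⟨n - k + (k - j + (i : ℕ)), by omega⟩ :=
      per _ (by omega)
    have e3 : f ⟨n - j + (i : ℕ), by omega⟩ = f ⟨n - k + (k - j + (i : ℕ)), by omega⟩ := by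
      congr 1; apply Fin.ext; simp only [Fin.val_mk]; omega
    show f ⟨(i : ℕ), _⟩ = f ⟨(j' : ℕ), _⟩
    rw [e1, e3, ← e2]
    congr 1; apply Fin.ext; simp only [Fin.val_mk]; omega

def MinBrd {n σ : ℕ} (f : Fin n → Fin σ) (k : ℕ) : Prop :=
  Brd f k ∧ ∀ j < k, ¬ Brd f j

lemma minBrd_le_half {n σ : ℕ} {f : Fin n → Fin σ} {k : ℕ} (h : MinBrd f k) : 2 * k ≤ n := by
  obtain ⟨hb, hmin⟩ := h
  by_contra h2
  have hkn := hb.2.1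
  exact hmin (2 * k - n) (by omega) (brd_shorten f k hb (by omega))

def glue {n σ k : ℕ} (hk : 0 < k) (hn : 2 * k ≤ n)
    (g : Fin k → Fin σ) (m : Fin (n - 2 * k) → Fin σ) : Fin n → Fin σ :=
  fun i => if h : (i : ℕ) < k then g ⟨i, h⟩
    else if h2 : (i : ℕ) < n - k then m ⟨(i : ℕ) - k, by omega⟩
    else g ⟨(i : ℕ) - (n - k), by omega⟩

lemma glue_lt {n σ k : ℕ} (hk : 0 < k) (hn : 2 * k ≤ n) (g : Fin k → Fin σ)
    (m : Fin (n - 2 * k) → Fin σ) (i : Fin n) (h : (i : ℕ) < k) :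
    glue hk hn g m i = g ⟨i, h⟩ := by
  simp [glue, h]

lemma glue_mid {n σ k : ℕ} (hk : 0 < k) (hn : 2 * k ≤ n) (g : Fin k → Fin σ)
    (m : Fin (n - 2 * k) → Fin σ) (i : Fin n) (h1 : k ≤ (i : ℕ)) (h2 : (i : ℕ) < n - k) :
    glue hk hn g m i = m ⟨(i : ℕ) - k, by omega⟩ := by
  simp [glue, h2, Nat.not_lt.mpr h1]

lemma glue_hi {n σ k : ℕ} (hk : 0 < k) (hn : 2 * k ≤ n) (g : Fin k → Fin σ)
    (m : Fin (n - 2 * k) → Fin σ) (i : Fin n) (h1 : n - k ≤ (i : ℕ)) :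
    glue hk hn g m i = g ⟨(i : ℕ) - (n - k), by omega⟩ := by
  have hkn : k < n := by omega
  have : ¬ ((i : ℕ) < k) := by omega
  simp [glue, this, Nat.not_lt.mpr h1]

lemma glue_brd {n σ k : ℕ} (hk : 0 < k) (hn : 2 * k ≤ n) (g : Fin k → Fin σ)
    (m : Fin (n - 2 * k) → Fin σ) : Brd (glue hk hn g m) k := by
  refine ⟨hk, by omega, ?_⟩
  intro i j hi hj
  rw [glue_lt hk hn g m i hi, glue_hi hk hn g m j (by omega)]
  congr 1
  apply Fin.ext
  simp only [Fin.val_mk]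
  omega

lemma glue_eq_self {n σ k : ℕ} (hk : 0 < k) (hn : 2 * k ≤ n) (f : Fin n → Fin σ)
    (hb : Brd f k) :
    glue hk hn (fun i : Fin k => f ⟨i, by omega⟩)
      (fun j : Fin (n - 2 * k) => f ⟨k + j, by omega⟩) = f := by
  funext i
  rcases lt_or_ge (i : ℕ) k with h | h
  · rw [glue_lt hk hn _ _ i h]
  · rcases lt_or_ge (i : ℕ) (n - k) with h2 | h2
    · rw [glue_mid hk hn _ _ i h h2]
      congr 1; apply Fin.ext; simp only [Fin.val_mk]; omega
    · rw [glue_hi hk hn _ _ i h2]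
      exact hb.2.2 ⟨(i : ℕ) - (n - k), by omega⟩ i (by simp; omega) (by simp; omega)

noncomputable def minBrdEquiv {n σ k : ℕ} (hk : 0 < k) (hn : 2 * k ≤ n) :
    {f : Fin n → Fin σ // MinBrd f k} ≃
      {g : Fin k → Fin σ // Unbordered (List.ofFn g)} × (Fin (n - 2 * k) → Fin σ) where
  toFun f := ⟨⟨fun i : Fin k => f.1 ⟨i, by omega⟩, by
      rw [unbordered_ofFn_iff]
      intro j hbg
      have hjk : j < k := hbg.2.1
      exact f.2.2 j hjk ((brd_transfer f.1 hn f.2.1 j hjk).mp hbg)⟩,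
    fun j : Fin (n - 2 * k) => f.1 ⟨k + j, by omega⟩⟩
  invFun p := ⟨glue hk hn p.1.1 p.2, by
    have hb := glue_brd hk hn p.1.1 p.2
    refine ⟨hb, ?_⟩
    intro j hjk hbj
    have h0 : 0 < j := hbj.1
    have := (brd_transfer (glue hk hn p.1.1 p.2) hn hb j hjk).mpr hbj
    have hgeq : (fun i : Fin k => glue hk hn p.1.1 p.2 ⟨i, by omega⟩) = p.1.1 := by
      funext i
      rw [glue_lt hk hn _ _ _ (by simpa using i.2)]
    rw [hgeq] at this
    exact ((unbordered_ofFn_iff p.1.1).mp p.1.2) j this⟩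
  left_inv f := Subtype.ext (glue_eq_self hk hn f.1 f.2.1)
  right_inv p := by
    obtain ⟨⟨g, hg⟩, m⟩ := p
    refine Prod.ext (Subtype.ext ?_) ?_
    · funext i
      show glue hk hn g m ⟨(i : ℕ), _⟩ = g i
      rw [glue_lt hk hn g m _ (by simpa using i.2)]
    · funext j
      show glue hk hn g m ⟨k + (j : ℕ), _⟩ = m j
      rw [glue_mid hk hn g m _ (by simp) (by simp; omega)]
      congr 1; apply Fin.ext; simp

lemma card_minBrd {n σ k : ℕ} (hk : 0 < k) (hn : 2 * k ≤ n) :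
    Nat.card {f : Fin n → Fin σ // MinBrd f k} = unbCount σ k * σ ^ (n - 2 * k) := by
  rw [Nat.card_congr (minBrdEquiv hk hn), Nat.card_prod, unbCount]
  congr 1
  simp [Nat.card_eq_fintype_card]

open Finset in
lemma key_identity (σ n : ℕ) :
    σ ^ n = unbCount σ n + ∑ k ∈ Finset.Icc 1 (n / 2), unbCount σ k * σ ^ (n - 2 * k) := by
  classical
  have h1 : unbCount σ n = (univ.filter fun f : Fin n → Fin σ => Unbordered (List.ofFn f)).card := by
    rw [unbCount, Nat.card_eq_fintype_card, Fintype.card_subtype]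
  have h2 : ∀ k ∈ Finset.Icc 1 (n / 2),
      unbCount σ k * σ ^ (n - 2 * k) = (univ.filter fun f : Fin n → Fin σ => MinBrd f k).card := by
    intro k hk
    rw [Finset.mem_Icc] at hk
    rw [← card_minBrd (σ := σ) (n := n) (by omega) (by omega), Nat.card_eq_fintype_card,
      Fintype.card_subtype]
  have cover : (univ : Finset (Fin n → Fin σ)) =
      (univ.filter fun f => Unbordered (List.ofFn f)) ∪
        (Finset.Icc 1 (n / 2)).biUnion (fun k => univ.filter fun f => MinBrd f k) := by
    ext f
    simp only [Finset.mem_union, Finset.mem_filter, Finset.mem_biUnion, Finset.mem_univ,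
      true_and, Finset.mem_Icc, true_iff]
    by_cases hu : Unbordered (List.ofFn f)
    · exact Or.inl hu
    · right
      rw [unbordered_ofFn_iff, not_forall] at hu
      obtain ⟨k, hk⟩ := hu
      rw [not_not] at hk
      have hex : ∃ k, Brd f k := ⟨k, hk⟩
      refine ⟨Nat.find hex, ⟨?_, ?_⟩, Nat.find_spec hex, fun j hj => Nat.find_min hex hj⟩
      · have := (Nat.find_spec hex).1; omega
      · have := minBrd_le_half (f := f) (k := Nat.find hex)
          ⟨Nat.find_spec hex, fun j hj => Nat.find_min hex hj⟩
        omega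
  have disj1 : Disjoint (univ.filter fun f : Fin n → Fin σ => Unbordered (List.ofFn f))
      ((Finset.Icc 1 (n / 2)).biUnion (fun k => univ.filter fun f => MinBrd f k)) := by
    rw [Finset.disjoint_left]
    intro f hf hf2
    simp only [Finset.mem_filter, Finset.mem_univ, true_and] at hf
    simp only [Finset.mem_biUnion, Finset.mem_filter, Finset.mem_univ, true_and] at hf2
    obtain ⟨k, _, hmk⟩ := hf2
    exact (unbordered_ofFn_iff f).mp hf k hmk.1
  have pd : ∀ k1 ∈ Finset.Icc 1 (n / 2), ∀ k2 ∈ Finset.Icc 1 (n / 2), k1 ≠ k2 →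
      Disjoint (univ.filter fun f : Fin n → Fin σ => MinBrd f k1)
        (univ.filter fun f : Fin n → Fin σ => MinBrd f k2) := by
    intro k1 _ k2 _ hne
    rw [Finset.disjoint_left]
    intro f hf1 hf2
    simp only [Finset.mem_filter, Finset.mem_univ, true_and] at hf1 hf2
    rcases Nat.lt_or_ge k1 k2 with h | h
    · exact hf2.2 k1 h hf1.1
    · exact hf1.2 k2 (by omega) hf2.1
  have := congrArg Finset.card cover
  rw [Finset.card_union_of_disjoint disj1, Finset.card_biUnion pd] at this
  rw [h1, Finset.sum_congr rfl h2, ← this]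
  simp

lemma unbCount_le (σ k : ℕ) : unbCount σ k ≤ σ ^ k := by
  classical
  rw [unbCount]
  calc Nat.card {f : Fin k → Fin σ // Unbordered (List.ofFn f)}
      ≤ Nat.card (Fin k → Fin σ) := by
        rw [Nat.card_eq_fintype_card, Nat.card_eq_fintype_card]
        exact Fintype.card_subtype_le _
    _ = σ ^ k := by simp [Nat.card_eq_fintype_card]

lemma unbCount_one (σ : ℕ) : unbCount σ 1 = σ := by
  rw [unbCount]
  have : ∀ f : Fin 1 → Fin σ, Unbordered (List.ofFn f) := by
    intro f
    rw [unbordered_ofFn_iff]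
    intro k hk
    have := hk.1; have := hk.2.1; omega
  rw [Nat.card_congr (Equiv.subtypeUnivEquiv this)]
  simp [Nat.card_eq_fintype_card]

theorem unbCount_ratio_tendsto (σ : ℕ) (hσ : 2 ≤ σ) :
    ∃ α : ℝ, Tendsto (fun i : ℕ => (unbCount σ i : ℝ) / (σ : ℝ) ^ i) atTop (nhds α) ∧
      1 - (σ : ℝ)⁻¹ - ((σ : ℝ) ^ 2)⁻¹ ≤ α := by
  set R : ℝ := (σ : ℝ) with hR
  have hR2 : (2 : ℝ) ≤ R := by rw [hR]; exact_mod_cast hσ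
  have hR0 : 0 < R := by linarith
  have hRinv : R⁻¹ < 1 := by
    rw [inv_lt_one_iff₀]; right; linarith
  have hRinv0 : 0 ≤ R⁻¹ := by positivity
  set p : ℕ → ℝ := fun k => (unbCount σ k : ℝ) / R ^ k with hp
  set c : ℕ → ℝ := fun k => if k = 0 then 0 else (unbCount σ k : ℝ) / R ^ (2 * k) with hc
  have hc0 : ∀ k, 0 ≤ c k := by
    intro k; rw [hc]; dsimp only; split
    · exact le_rfl
    · positivity
  have hcast : ∀ k : ℕ, ((unbCount σ k : ℕ) : ℝ) ≤ R ^ k := by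
    intro k
    rw [hR, ← Nat.cast_pow]
    exact_mod_cast unbCount_le σ k
  have hck : ∀ k, c k ≤ R⁻¹ ^ k := by
    intro k
    rw [hc]; dsimp only; split
    · positivity
    · rw [div_le_iff₀ (by positivity)]
      have he : R⁻¹ ^ k * R ^ (2 * k) = R ^ k := by
        rw [inv_pow, show 2 * k = k + k by ring, pow_add, ← mul_assoc,
          inv_mul_cancel₀ (by positivity), one_mul]
      rw [he]
      exact hcast k
  have hsum : Summable c :=
    Summable.of_nonneg_of_le hc0 hck (summable_geometric_of_lt_one hRinv0 hRinv)
  have hpn : ∀ n, p n = 1 - ∑ k ∈ Finset.range (n / 2 + 1), c k := by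
    intro n
    have hrange : Finset.range (n / 2 + 1) = insert 0 (Finset.Icc 1 (n / 2)) := by
      ext x; simp; omega
    rw [hrange, Finset.sum_insert (by simp)]
    have hc00 : c 0 = 0 := by simp [hc]
    rw [hc00, zero_add]
    have hid : (R : ℝ) ^ n = (unbCount σ n : ℝ) +
        ∑ k ∈ Finset.Icc 1 (n / 2), (unbCount σ k : ℝ) * R ^ (n - 2 * k) := by
      rw [hR]
      exact_mod_cast key_identity σ n
    have hterm : ∀ k ∈ Finset.Icc 1 (n / 2),
        (unbCount σ k : ℝ) * R ^ (n - 2 * k) / R ^ n = c k := by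
      intro k hk
      rw [Finset.mem_Icc] at hk
      rw [hc]; dsimp only; rw [if_neg (by omega)]
      rw [div_eq_div_iff (by positivity) (by positivity), mul_assoc, ← pow_add]
      congr 2
      omega
    have hRn : (R : ℝ) ^ n ≠ 0 := by positivity
    have : p n = ((R : ℝ) ^ n - ∑ k ∈ Finset.Icc 1 (n / 2),
        (unbCount σ k : ℝ) * R ^ (n - 2 * k)) / R ^ n := by
      rw [hp]; dsimp only
      rw [eq_div_iff hRn] at *
      rw [div_mul_cancel₀ _ hRn]
      linarith [hid]
    rw [this, sub_div, div_self hRn, Finset.sum_div, Finset.sum_congr rfl hterm]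
  set T : ℝ := ∑' k, c k with hT
  refine ⟨1 - T, ?_, ?_⟩
  · have h1 : Tendsto (fun m => ∑ k ∈ Finset.range m, c k) atTop (nhds T) :=
      hsum.hasSum.tendsto_sum_nat
    have h2 : Tendsto (fun n : ℕ => n / 2 + 1) atTop atTop := by
      apply tendsto_atTop_atTop.mpr
      intro b
      exact ⟨2 * b, fun n hn => by omega⟩
    have h3 := h1.comp h2
    have hfun : p = fun n => 1 - ∑ k ∈ Finset.range (n / 2 + 1), c k := by
      funext n
      rw [hpn n]
    show Tendsto p atTop (nhds (1 - T))
    rw [hfun]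
    exact tendsto_const_nhds.sub h3
  · -- the bound : T ≤ R⁻¹ + (R^2)⁻¹
    have hc1 : c 1 = R⁻¹ := by
      rw [hc]; dsimp only; rw [if_neg (by omega), unbCount_one, ← hR]
      rw [show (2 : ℕ) * 1 = 2 by rfl]
      field_simp
    have hp2 : ∀ k, 2 ≤ k → (unbCount σ k : ℝ) ≤ (1 - R⁻¹) * R ^ k := by
      intro k hk
      have h1 : p k ≤ 1 - R⁻¹ := by
        rw [hpn k]
        have hsub : Finset.range 2 ⊆ Finset.range (k / 2 + 1) := by
          apply Finset.range_subset_range.mpr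
          omega
        have := Finset.sum_le_sum_of_subset_of_nonneg hsub (fun i _ _ => hc0 i)
        have h2 : ∑ k ∈ Finset.range 2, c k = R⁻¹ := by
          rw [Finset.sum_range_succ, Finset.sum_range_one, hc1]
          have : c 0 = 0 := by simp [hc]
          rw [this, zero_add]
        linarith
      rw [hp] at h1
      dsimp only at h1
      rw [div_le_iff₀ (by positivity)] at h1
      linarith
    have hck2 : ∀ k : ℕ, c (k + 2) ≤ ((1 - R⁻¹) * R⁻¹ ^ 2) * R⁻¹ ^ k := by
      intro k
      rw [hc]; dsimp only; rw [if_neg (by omega)]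
      rw [div_le_iff₀ (by positivity)]
      have h1 : R⁻¹ ^ 2 * R⁻¹ ^ k * R ^ (2 * (k + 2)) = R ^ (k + 2) := by
        rw [← pow_add, inv_pow, show 2 * (k + 2) = (2 + k) + (k + 2) by ring,
          pow_add R (2 + k) (k + 2), ← mul_assoc, inv_mul_cancel₀ (by positivity), one_mul]
      calc ((unbCount σ (k + 2) : ℕ) : ℝ) ≤ (1 - R⁻¹) * R ^ (k + 2) := hp2 _ (by omega)
        _ = (1 - R⁻¹) * R⁻¹ ^ 2 * R⁻¹ ^ k * R ^ (2 * (k + 2)) := by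
            rw [show (1 - R⁻¹) * R⁻¹ ^ 2 * R⁻¹ ^ k * R ^ (2 * (k + 2)) =
              (1 - R⁻¹) * (R⁻¹ ^ 2 * R⁻¹ ^ k * R ^ (2 * (k + 2))) by ring, h1]
    have hgeo : Summable (fun k : ℕ => ((1 - R⁻¹) * R⁻¹ ^ 2) * R⁻¹ ^ k) :=
      (summable_geometric_of_lt_one hRinv0 hRinv).mul_left _
    have hsum2 : Summable (fun k => c (k + 2)) := (summable_nat_add_iff 2).mpr hsum
    have htail : ∑' k, c (k + 2) ≤ (R ^ 2)⁻¹ := by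
      calc ∑' k, c (k + 2) ≤ ∑' k : ℕ, ((1 - R⁻¹) * R⁻¹ ^ 2) * R⁻¹ ^ k :=
            Summable.tsum_le_tsum hck2 hsum2 hgeo
        _ = ((1 - R⁻¹) * R⁻¹ ^ 2) * (1 - R⁻¹)⁻¹ := by
            rw [tsum_mul_left, tsum_geometric_of_lt_one hRinv0 hRinv]
        _ = (R ^ 2)⁻¹ := by
            have h0 : 1 - R⁻¹ ≠ 0 := by
              intro h
              have : R⁻¹ = 1 := by linarith
              rw [this] at hRinv
              linarith
            rw [show (1 - R⁻¹) * R⁻¹ ^ 2 * (1 - R⁻¹)⁻¹ =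
              R⁻¹ ^ 2 * ((1 - R⁻¹) * (1 - R⁻¹)⁻¹) by ring, mul_inv_cancel₀ h0, mul_one, inv_pow]
    have hT1 : T = c 0 + ∑' k, c (k + 1) := Summable.tsum_eq_zero_add hsum
    have hT2 : ∑' k, c (k + 1) = c 1 + ∑' k, c (k + 2) :=
      Summable.tsum_eq_zero_add ((summable_nat_add_iff 1).mpr hsum)
    have hc00 : c 0 = 0 := by simp [hc]
    have : T ≤ R⁻¹ + (R ^ 2)⁻¹ := by
      rw [hT1, hT2, hc00, hc1]
      linarith
    rw [hR] at *
    linarith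
end

section
/- For every alphabet size σ ≥ 2 and every i ≥ 2, the number of unbordered strings of length i satisfies b(i, σ) ≥ σ^i − σ^{i−1} − σ^{i−2}. -/
open List Finset Filter

/-!
A bordered word `w` of length `n + 2` either has equal first and last letters (at most
`σ ^ (n + 1)` words), or its longest proper period `p` satisfies `n + 2 ≤ 2 * p ≤ 2 * n`: a
period `p < (n + 2) / 2` would make `2 * p` a longer one, and `p = n + 1` would make the first
and last letters equal. Such a `w` is determined by its first `p` letters, among which those at
positions `0` and `n + 1 - p` differ, as they are the first and last letters of `w`. This leaves
at most `(σ - 1) * σ ^ (p - 1)` words for each `p`, and these geometric terms sum to at most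
`σ ^ n`.
-/

theorem card_filter_apply_eq {ι α : Type*} [Fintype ι] [DecidableEq ι] [Fintype α]
    [DecidableEq α] {a b : ι} (hab : a ≠ b) :
    #{g : ι → α | g a = g b} = Fintype.card α ^ (Fintype.card ι - 1) := by
  rw [card_equiv (Equiv.funSplitAt b α) (t := {x | x.2 ⟨a, hab⟩ = x.1}) (by simp)]
  simp only [card_filter, Fintype.sum_prod_type_right]
  simp [Fintype.card_subtype_compl]

theorem card_filter_apply_ne {ι α : Type*} [Fintype ι] [DecidableEq ι] [Fintype α]
    [DecidableEq α] {a b : ι} (hab : a ≠ b) :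
    #{g : ι → α | g a ≠ g b} =
      (Fintype.card α - 1) * Fintype.card α ^ (Fintype.card ι - 1) := by
  let a' : {j // j ≠ b} := ⟨a, hab⟩
  calc #{g : ι → α | g a ≠ g b}
      = #{x : α × ({j // j ≠ b} → α) | x.2 a' ≠ x.1} :=
        card_equiv (Equiv.funSplitAt b α) (by simp [a'])
    _ = ∑ h : {j // j ≠ b} → α, #{y : α | y ≠ h a'} := by
        simp only [card_filter, Fintype.sum_prod_type_right, ne_comm]
    _ = _ := by simp [filter_ne', Fintype.card_subtype_compl, mul_comm]

theorem sum_range_sub_one_mul_pow_le (σ n : ℕ) :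
    ∑ j ∈ Finset.range n, (σ - 1) * σ ^ j ≤ σ ^ n := by
  rcases Nat.eq_zero_or_pos σ with rfl | hσ
  · simp
  · rw [← mul_sum, mul_comm, geom_sum_mul_of_one_le hσ]
    exact Nat.sub_le _ _

namespace List

variable {α : Type*} {v w : List α} {p q : ℕ}

theorem HasPeriod.add (hp : w.HasPeriod p) (hq : w.HasPeriod q) : w.HasPeriod (p + q) := by
  rw [hasPeriod_iff_getElem?] at *
  intro i hi
  rw [hp i (by omega), hq (i + p) (by omega), Nat.add_assoc]

theorem HasPeriod.ext (hp0 : 0 < p) (hv : v.HasPeriod p) (hw : w.HasPeriod p)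
    (hlen : v.length = w.length) (h : ∀ i < p, v[i]? = w[i]?) : v = w := by
  refine ext_getElem? fun i => ?_
  by_cases hi : i < v.length
  · rw [← hv.getElem?_mod p i v hi, ← hw.getElem?_mod p i w (hlen ▸ hi)]
    exact h _ (Nat.mod_lt i hp0)
  · rw [getElem?_eq_none (by omega), getElem?_eq_none (by omega)]

theorem HasPeriod.exists_hasPeriod_le_two_mul (hp : w.HasPeriod p) (hp0 : 0 < p)
    (hpw : p < w.length) : ∃ q < w.length, w.length ≤ 2 * q ∧ w.HasPeriod q := by
  classical
  set q := Nat.findGreatest w.HasPeriod (w.length - 1)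
  have hpq : p ≤ q := Nat.le_findGreatest (by omega) hp
  have hq : w.HasPeriod q := Nat.findGreatest_spec (by omega) hp
  have hqw : q ≤ w.length - 1 := Nat.findGreatest_le _
  refine ⟨q, by omega, ?_, hq⟩
  by_contra! hlt
  have : q + q ≤ q := Nat.le_findGreatest (by omega) (hq.add hq)
  omega

theorem hasPeriod_of_prefix_of_suffix {B : List α} (hpre : B <+: w) (hsuf : B <:+ w) :
    w.HasPeriod (w.length - B.length) := by
  obtain ⟨U, rfl⟩ := hsuf
  rw [HasPeriod, length_append, Nat.add_sub_cancel, take_left' rfl, prefix_append_right_inj]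
  exact hpre

theorem HasPeriod.ofFn_apply_eq {n : ℕ} {f : Fin n → α} (h : (ofFn f).HasPeriod p)
    (i j : Fin n) (hij : i.val + p = j) : f i = f j := by
  have := (hasPeriod_iff_getElem?.1 h) i (by simp; omega)
  simpa [hij] using this

end List

theorem exists_hasPeriod_of_not_unbordered {α : Type*} {w : List α} (h : ¬ Unbordered w) :
    ∃ p, 0 < p ∧ p < w.length ∧ w.HasPeriod p := by
  simp only [Unbordered, not_forall, not_not] at h
  obtain ⟨B, hB, hBw, hpre, hsuf⟩ := h
  have hB0 := List.length_pos_iff.2 hB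
  exact ⟨w.length - B.length, by omega, by omega, hasPeriod_of_prefix_of_suffix hpre hsuf⟩

theorem exists_long_hasPeriod_of_not_unbordered {α : Type*} {n : ℕ} {f : Fin (n + 2) → α}
    (h : ¬ Unbordered (ofFn f)) (hfl : f 0 ≠ f (Fin.last _)) :
    ∃ j < n, n ≤ 2 * j ∧ (ofFn f).HasPeriod (j + 1) := by
  obtain ⟨p, hp0, hpn, hp⟩ := exists_hasPeriod_of_not_unbordered h
  obtain ⟨q, hqn, hnq, hq⟩ := hp.exists_hasPeriod_le_two_mul hp0 hpn
  simp only [length_ofFn] at hqn hnq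
  have hq1 : q ≠ n + 1 := by
    rintro rfl
    exact hfl (hq.ofFn_apply_eq 0 (Fin.last _) (by simp))
  exact ⟨q - 1, by omega, by omega, by rwa [Nat.sub_add_cancel (by omega)]⟩

section Counting

variable {α : Type*} [Fintype α] [DecidableEq α]

open Classical in
theorem card_filter_hasPeriod_le {n j : ℕ} (hjn : j < n) (hnj : n ≤ 2 * j) :
    #{f : Fin (n + 2) → α | f 0 ≠ f (Fin.last _) ∧ (ofFn f).HasPeriod (j + 1)}
      ≤ (Fintype.card α - 1) * Fintype.card α ^ j := by
  have hcast : j + 1 ≤ n + 2 := by omega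
  have hnot : (⟨0, by omega⟩ : Fin (j + 1)) ≠ ⟨n - j, by omega⟩ := by
    simp only [ne_eq, Fin.mk.injEq]; omega
  calc _ ≤ #{g : Fin (j + 1) → α | g ⟨0, by omega⟩ ≠ g ⟨n - j, by omega⟩} := by
        refine card_le_card_of_injOn (fun f => f ∘ Fin.castLE hcast) ?_ ?_
        · intro f hf
          simp only [coe_filter, mem_univ, true_and, Set.mem_ofPred_eq,
            Function.comp_apply] at hf ⊢
          rw [hf.2.ofFn_apply_eq (Fin.castLE hcast ⟨n - j, by omega⟩) (Fin.last _)
            (by simp; omega)]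
          exact hf.1
        · intro f hf g hg hfg
          simp only [coe_filter, mem_univ, true_and, Set.mem_ofPred_eq] at hf hg
          refine List.ofFn_injective (hf.2.ext (Nat.succ_pos j) hg.2 (by simp) fun i hi => ?_)
          have := congrFun hfg ⟨i, hi⟩
          simp only [Function.comp_apply, Fin.castLE_mk] at this
          rw [List.getElem?_ofFn, List.getElem?_ofFn, dif_pos (by omega), dif_pos (by omega),
            this]
    _ = _ := by rw [card_filter_apply_ne hnot]; simp

open Classical in
theorem card_filter_not_unbordered_le (n : ℕ) :
    #{f : Fin (n + 2) → α | ¬ Unbordered (ofFn f)}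
      ≤ Fintype.card α ^ (n + 1) + Fintype.card α ^ n := by
  let E : Finset (Fin (n + 2) → α) := {f | f 0 = f (Fin.last _)}
  let S (j : ℕ) : Finset (Fin (n + 2) → α) :=
    {f | f 0 ≠ f (Fin.last _) ∧ (ofFn f).HasPeriod (j + 1)}
  let J := {j ∈ Finset.range n | n ≤ 2 * j}
  have hcover : ({f | ¬ Unbordered (ofFn f)} : Finset (Fin (n + 2) → α)) ⊆
      E ∪ J.biUnion S := by
    intro f hf
    by_cases hfl : f 0 = f (Fin.last _)
    · exact mem_union_left _ (Finset.mem_filter.2 ⟨mem_univ _, hfl⟩)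
    obtain ⟨j, hjn, hnj, hj⟩ :=
      exists_long_hasPeriod_of_not_unbordered (Finset.mem_filter.1 hf).2 hfl
    refine mem_union_right _ (mem_biUnion.2 ⟨j, ?_, ?_⟩)
    · exact Finset.mem_filter.2 ⟨Finset.mem_range.2 hjn, hnj⟩
    · exact Finset.mem_filter.2 ⟨mem_univ _, hfl, hj⟩
  calc _ ≤ #(E ∪ J.biUnion S) := card_le_card hcover
    _ ≤ #E + ∑ j ∈ J, #(S j) :=
        (card_union_le _ _).trans (Nat.add_le_add_left card_biUnion_le _)
    _ ≤ Fintype.card α ^ (n + 1) + ∑ j ∈ J, (Fintype.card α - 1) * Fintype.card α ^ j := by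
        gcongr with j hj
        · rw [card_filter_apply_eq (Fin.last_pos).ne]; simp
        · simp only [J, Finset.mem_filter, Finset.mem_range] at hj
          exact card_filter_hasPeriod_le hj.1 hj.2
    _ ≤ Fintype.card α ^ (n + 1) +
          ∑ j ∈ Finset.range n, (Fintype.card α - 1) * Fintype.card α ^ j := by
        gcongr
        exact Finset.filter_subset _ _
    _ ≤ _ := Nat.add_le_add_left (sum_range_sub_one_mul_pow_le _ _) _

end Counting

theorem unbCount_lower_bound_general (σ i : ℕ) (hi : 2 ≤ i) :
    (σ : ℝ) ^ i - (σ : ℝ) ^ (i - 1) - (σ : ℝ) ^ (i - 2) ≤ (unbCount σ i : ℝ) := by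
  obtain ⟨n, rfl⟩ : ∃ n, i = n + 2 := ⟨i - 2, by omega⟩
  classical
  have hsplit : unbCount σ (n + 2) + #{f : Fin (n + 2) → Fin σ | ¬ Unbordered (ofFn f)}
      = σ ^ (n + 2) := by
    rw [unbCount, Nat.card_eq_fintype_card, Fintype.card_subtype,
      card_filter_add_card_filter_not]
    simp
  have hbordered := card_filter_not_unbordered_le (α := Fin σ) n
  rw [Fintype.card_fin] at hbordered
  rw [show n + 2 - 1 = n + 1 by omega, Nat.add_sub_cancel]
  have h1 := congrArg (Nat.cast : ℕ → ℝ) hsplit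
  have h2 := (Nat.cast_le (α := ℝ)).2 hbordered
  push_cast at h1 h2
  linarith

theorem unbCount_lower_bound (σ i : ℕ) (hσ : 2 ≤ σ) (hi : 2 ≤ i) :
    (σ : ℝ) ^ i - (σ : ℝ) ^ (i - 1) - (σ : ℝ) ^ (i - 2) ≤ (unbCount σ i : ℝ) :=
  unbCount_lower_bound_general σ i hi
end

section
/- For every alphabet size σ ≥ 2 and all integers j ≥ 1 and i ≥ j + 2, the number of unbordered strings S of length i over an alphabet of size σ such that S[1] = S[m] for at least one m with 2 ≤ m ≤ j + 1 is at most (σ−1)·σ^{i−1} − (σ−1)^{j+1}·σ^{i−j−1}. -/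
/-!
An unbordered string of length at least two has different first and last letters (otherwise
that letter is a border). So the strings counted lie in the set of strings with
`S[1] ≠ S[i]`, of size `(σ - 1) σ^(i-1)`, and are disjoint from its subset of strings with
`S[1] ≠ S[m]` for every `m ∈ {2, …, j + 1, i}`, of size `(σ - 1)^(j+1) σ^(i-j-1)`.
-/

open List Finset Filter

theorem Unbordered.apply_last_ne_apply_zero {α : Type*} {n : ℕ} (hn : 1 ≤ n)
    {f : Fin (n + 1) → α} (hf : Unbordered (List.ofFn f)) : f (Fin.last n) ≠ f 0 := by
  intro heq
  have hpre : [f 0] <+: List.ofFn f := by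
    rw [List.ofFn_succ]; exact ⟨_, rfl⟩
  have hsuf : [f 0] <:+ List.ofFn f := by
    rw [← heq, List.ofFn_succ']
    exact ⟨_, List.concat_eq_append.symm⟩
  exact hf [f 0] (List.cons_ne_nil _ _) (by simp; omega) hpre hsuf

theorem card_forall_ne_apply {ι α : Type*} [Fintype ι] [Fintype α] {p : ι} {T : Finset ι}
    (hp : p ∉ T) :
    Nat.card {f : ι → α // ∀ t ∈ T, f t ≠ f p} = Fintype.card α *
      ((Fintype.card α - 1) ^ #T * Fintype.card α ^ (Fintype.card ι - 1 - #T)) := by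
  classical
  have hfiber (a : α) : #{f : ι → α | (∀ t ∈ T, f t ≠ f p) ∧ f p = a} =
      (Fintype.card α - 1) ^ #T * Fintype.card α ^ (Fintype.card ι - 1 - #T) := by
    have hbox : ({f : ι → α | (∀ t ∈ T, f t ≠ f p) ∧ f p = a} : Finset _) =
        Fintype.piFinset fun t => if t ∈ T then {a}ᶜ else if t = p then {a} else univ := by
      ext f
      simp only [Finset.mem_filter, mem_univ, true_and, Fintype.mem_piFinset]
      constructor
      · rintro ⟨hT, rfl⟩ t
        split_ifs with ht htp
        · simpa using hT t ht
        · simp [htp]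
        · exact mem_univ _
      · intro h
        have hfp : f p = a := by simpa [hp] using h p
        refine ⟨fun t ht => ?_, hfp⟩
        simpa [ht, hfp] using h t
    have hrest : #{t | t ∉ T ∧ t ≠ p} = Fintype.card ι - 1 - #T := by
      have : ({t | t ∉ T ∧ t ≠ p} : Finset ι) = (insert p T)ᶜ := by
        ext t; simp [and_comm]
      rw [this, card_compl, card_insert_of_notMem hp]
      omega
    rw [hbox, Fintype.card_piFinset]
    simp only [apply_ite card, card_compl, card_singleton, card_univ]
    rw [prod_ite, prod_ite, prod_const, prod_const_one, prod_const, Finset.filter_filter,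
      filter_mem_eq_inter, univ_inter, hrest, one_mul]
  rw [Nat.card_eq_fintype_card, Fintype.card_subtype,
    card_eq_sum_card_fiberwise (f := fun f => f p) (t := univ) fun _ _ => mem_univ _]
  simp only [Finset.filter_filter, hfiber, sum_const, card_univ, smul_eq_mul]

theorem card_unbordered_repeat_add_card_forall_ne_le {α : Type*} [Fintype α] {m j : ℕ}
    (hm : 1 ≤ m) {T : Finset (Fin (m + 1))} (hlast : Fin.last m ∈ T)
    (hT : ∀ k : Fin (m + 1), 1 ≤ (k : ℕ) → (k : ℕ) ≤ j → k ∈ T) :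
    Nat.card {f : Fin (m + 1) → α // Unbordered (List.ofFn f) ∧
        ∃ k l : Fin (m + 1), 1 ≤ (k : ℕ) ∧ (k : ℕ) ≤ j ∧ (l : ℕ) = 0 ∧ f k = f l} +
      Nat.card {f : Fin (m + 1) → α // ∀ t ∈ T, f t ≠ f 0} ≤
      Nat.card {f : Fin (m + 1) → α // ∀ t ∈ ({Fin.last m} : Finset _), f t ≠ f 0} := by
  classical
  simp only [Nat.card_eq_fintype_card, Fintype.card_subtype]
  rw [← card_union_of_disjoint]
  · refine card_le_card (union_subset (fun f hf => ?_) (fun f hf => ?_))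
    · simp only [Finset.mem_filter, mem_univ, true_and, Finset.mem_singleton, forall_eq] at hf ⊢
      exact hf.1.apply_last_ne_apply_zero hm
    · simp only [Finset.mem_filter, mem_univ, true_and, Finset.mem_singleton, forall_eq] at hf ⊢
      exact hf _ hlast
  · refine disjoint_left.mpr fun f hrep havoid => ?_
    simp only [Finset.mem_filter, mem_univ, true_and] at hrep havoid
    obtain ⟨-, k, l, hk1, hkj, hl, hkl⟩ := hrep
    obtain rfl : l = 0 := Fin.ext hl
    exact havoid k (hT k hk1 hkj) hkl

theorem unbordered_with_repeat_upper_bound_general (σ i j : ℕ) (hσ : 2 ≤ σ)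
    (hi : j + 2 ≤ i) :
    (Nat.card {f : Fin i → Fin σ // Unbordered (List.ofFn f) ∧
        ∃ k l : Fin i, 1 ≤ (k : ℕ) ∧ (k : ℕ) ≤ j ∧ (l : ℕ) = 0 ∧ f k = f l} : ℝ) ≤
      ((σ : ℝ) - 1) * (σ : ℝ) ^ (i - 1) - ((σ : ℝ) - 1) ^ (j + 1) * (σ : ℝ) ^ (i - j - 1) := by
  obtain ⟨r, rfl⟩ : ∃ r, i = j + r + 1 + 1 := ⟨i - j - 2, by omega⟩
  set T : Finset (Fin (j + r + 1 + 1)) := insert (Fin.last _) (Ioc 0 ⟨j, by omega⟩)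
  have hT : ∀ k : Fin (j + r + 1 + 1), 1 ≤ (k : ℕ) → (k : ℕ) ≤ j → k ∈ T := fun k hk1 hkj =>
    mem_insert_of_mem (by simp only [Finset.mem_Ioc, Fin.lt_def, Fin.le_def, Fin.val_zero]; omega)
  have hcardT : #T = j + 1 := by
    rw [card_insert_of_notMem (by simp only [Finset.mem_Ioc, Fin.le_def, Fin.val_last]; omega),
      Fin.card_Ioc]
    rfl
  have h0T : (0 : Fin (j + r + 1 + 1)) ∉ T := by simp [T, Fin.ext_iff]
  have h0last : (0 : Fin (j + r + 1 + 1)) ∉ ({Fin.last _} : Finset _) := by simp [Fin.ext_iff]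
  have hcard := card_unbordered_repeat_add_card_forall_ne_le (α := Fin σ) (by omega)
    (mem_insert_self _ _) hT
  rw [card_forall_ne_apply h0T, card_forall_ne_apply h0last, hcardT] at hcard
  simp only [card_singleton, Fintype.card_fin, pow_one,
    show j + r + 1 + 1 - 1 - (j + 1) = r by omega, show j + r + 1 + 1 - 1 - 1 = j + r by omega]
    at hcard
  have hcardℝ := (Nat.cast_le (α := ℝ)).mpr hcard
  push_cast [Nat.cast_sub (show 1 ≤ σ by omega)] at hcardℝ
  rw [show j + r + 1 + 1 - 1 = j + r + 1 by omega, show j + r + 1 + 1 - j - 1 = r + 1 by omega]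
  linear_combination hcardℝ

theorem unbordered_with_repeat_upper_bound (σ i j : ℕ) (hσ : 2 ≤ σ) (hj : 1 ≤ j)
    (hi : j + 2 ≤ i) :
    (Nat.card {f : Fin i → Fin σ // Unbordered (List.ofFn f) ∧
        ∃ k l : Fin i, 1 ≤ (k : ℕ) ∧ (k : ℕ) ≤ j ∧ (l : ℕ) = 0 ∧ f k = f l} : ℝ) ≤
      ((σ : ℝ) - 1) * (σ : ℝ) ^ (i - 1) - ((σ : ℝ) - 1) ^ (j + 1) * (σ : ℝ) ^ (i - j - 1) :=
  unbordered_with_repeat_upper_bound_general σ i j hσ hi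
end

section
/- Let S₁ and S₂ be unbordered strings over the same alphabet, let T₁ = S₁ P₁ ⋯ P_k where k ≥ 0 and each P_r is a nonempty prefix of S₁, and let T₂ = S₂ Q₁ ⋯ Q_l where l ≥ 0 and each Q_r is a nonempty prefix of S₂. If T₁ = T₂ then S₁ = S₂. -/
open List Finset Filter

/-!
If `S₁` is a proper prefix of `S₂ = S₁ R`, and `S₂` is a prefix of `S₁ P₁ ⋯ P_k`, then `R` is a
nonempty prefix of `P₁ ⋯ P_k`; it therefore ends with a nonempty prefix of some `P_r`, hence of
`S₁`. That piece is a border of `S₂`. So whichever of `S₁`, `S₂` is a prefix of the other cannot be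
a proper one.
-/

theorem exists_prefix_suffix_of_prefix_flatten {α : Type*} {S R : List α} {L : List (List α)}
    (hL : ∀ P ∈ L, P <+: S) (hR : R ≠ []) (hRL : R <+: L.flatten) :
    ∃ P, P ≠ [] ∧ P <+: S ∧ P <:+ R := by
  induction L generalizing R with
  | nil => exact absurd (List.prefix_nil.mp hRL) hR
  | cons P₀ L ih =>
    rw [List.flatten_cons] at hRL
    rcases List.prefix_or_prefix_of_prefix hRL (List.prefix_append P₀ L.flatten) with hRP₀ | hP₀R
    · exact ⟨R, hR, hRP₀.trans (hL P₀ List.mem_cons_self), List.suffix_refl R⟩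
    · obtain ⟨R', rfl⟩ := hP₀R
      rcases eq_or_ne R' [] with rfl | hR'
      · exact ⟨_, hR, (List.append_nil P₀).symm ▸ hL P₀ List.mem_cons_self, List.suffix_refl _⟩
      obtain ⟨P, hP, hPS, hPR'⟩ :=
        ih (fun P hP => hL P (List.mem_cons_of_mem _ hP)) hR'
          ((List.prefix_append_right_inj P₀).mp hRL)
      exact ⟨P, hP, hPS, hPR'.trans (List.suffix_append P₀ R')⟩

theorem Unbordered.eq_of_prefix_of_prefix_append_flatten {α : Type*} {S₁ S₂ : List α}
    {L : List (List α)} (h₂ : Unbordered S₂) (hL : ∀ P ∈ L, P <+: S₁) (h₁₂ : S₁ <+: S₂)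
    (h₂₁ : S₂ <+: S₁ ++ L.flatten) : S₁ = S₂ := by
  obtain ⟨R, rfl⟩ := h₁₂
  rcases eq_or_ne R [] with rfl | hR
  · exact (List.append_nil S₁).symm
  obtain ⟨P, hP, hPS₁, hPR⟩ :=
    exists_prefix_suffix_of_prefix_flatten hL hR ((List.prefix_append_right_inj S₁).mp h₂₁)
  have hlen : P.length < (S₁ ++ R).length := by
    simpa using hPS₁.length_le.trans_lt (Nat.lt_add_of_pos_right (List.length_pos_of_ne_nil hR))
  exact absurd (hPR.trans (List.suffix_append S₁ R))
    (h₂ P hP hlen (hPS₁.trans (List.prefix_append S₁ R)))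

theorem generated_strings_distinct {α : Type*} (S₁ S₂ : List α)
    (h₁ : Unbordered S₁) (h₂ : Unbordered S₂) (L₁ L₂ : List (List α))
    (hL₁ : ∀ P ∈ L₁, P ≠ [] ∧ P <+: S₁) (hL₂ : ∀ Q ∈ L₂, Q ≠ [] ∧ Q <+: S₂)
    (heq : S₁ ++ L₁.flatten = S₂ ++ L₂.flatten) : S₁ = S₂ := by
  have hS₁ : S₁ <+: S₂ ++ L₂.flatten := heq ▸ List.prefix_append S₁ L₁.flatten
  have hS₂ : S₂ <+: S₁ ++ L₁.flatten := heq ▸ List.prefix_append S₂ L₂.flatten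
  rcases List.prefix_or_prefix_of_prefix hS₁ (List.prefix_append S₂ L₂.flatten) with h | h
  · exact h₂.eq_of_prefix_of_prefix_append_flatten (fun P hP => (hL₁ P hP).2) h hS₂
  · exact (h₁.eq_of_prefix_of_prefix_append_flatten (fun Q hQ => (hL₂ Q hQ).2) h hS₁).symm
end

section
/- Let n and j be positive integers, and let S be an unbordered string of length i with ⌈n/2⌉ ≤ i < n − j whose first letter differs from each of the j letters that follow it (S[1] ≠ S[m] for all 2 ≤ m ≤ j + 1). Then the number of distinct strings of length n of the form S P₁ ⋯ P_k, where k ≥ 1 and each P_r is a nonempty prefix of S, is at least 2^j. -/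
open List Finset Filter

namespace GeneratedAux

/-- composition of `r` from cut bits -/
def comp : List Bool → ℕ → List ℕ
  | [], r => List.replicate r 1
  | b :: bs, r =>
    match comp bs (r - 1) with
    | [] => []
    | x :: xs => if b then 1 :: x :: xs else (x + 1) :: xs

lemma comp_ne_nil (bs : List Bool) (r : ℕ) (hr : bs.length + 1 ≤ r) :
    comp bs r ≠ [] := by
  induction bs generalizing r with
  | nil => simp [comp]; omega
  | cons b bs ih =>
    have h := ih (r - 1) (by simp at hr ⊢; omega)
    simp only [comp]
    rcases hc : comp bs (r-1) with _ | ⟨x, xs⟩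
    · exact absurd hc h
    · cases b <;> simp

lemma comp_sum (bs : List Bool) (r : ℕ) (hr : bs.length + 1 ≤ r) :
    (comp bs r).sum = r := by
  induction bs generalizing r with
  | nil => simp [comp]
  | cons b bs ih =>
    have hne := comp_ne_nil bs (r - 1) (by simp at hr; omega)
    have hs := ih (r - 1) (by simp at hr; omega)
    simp only [comp]
    rcases hc : comp bs (r-1) with _ | ⟨x, xs⟩
    · exact absurd hc hne
    · rw [hc] at hs
      simp at hs
      cases b <;> simp <;> omega

lemma comp_mem (bs : List Bool) (r : ℕ) (hr : bs.length + 1 ≤ r) :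
    ∀ x ∈ comp bs r, 1 ≤ x ∧ x ≤ bs.length + 1 := by
  induction bs generalizing r with
  | nil => intro x hx; simp [comp] at hx; omega
  | cons b bs ih =>
    have hne := comp_ne_nil bs (r - 1) (by simp at hr; omega)
    have hm := ih (r - 1) (by simp at hr; omega)
    simp only [comp]
    rcases hc : comp bs (r-1) with _ | ⟨x, xs⟩
    · exact absurd hc hne
    · rw [hc] at hm
      intro y hy
      cases b <;> simp at hy hm ⊢
      · rcases hy with rfl | h
        · have := hm.1; omega
        · have := hm.2 y h; omega
      · rcases hy with rfl | rfl | h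
        · omega
        · have := hm.1; omega
        · have := hm.2 y h; omega

lemma comp_sums (bs : List Bool) (r : ℕ) (hr : bs.length + 1 ≤ r)
    (p : ℕ) (hp1 : 1 ≤ p) (hp2 : p ≤ bs.length) :
    (∃ t, ((comp bs r).take t).sum = p) ↔ bs.getD (p - 1) false = true := by
  induction bs generalizing r p with
  | nil => simp at hp2; omega
  | cons b bs ih =>
    have hne := comp_ne_nil bs (r - 1) (by simp at hr; omega)
    have hmem := comp_mem bs (r - 1) (by simp at hr; omega)
    have IH := fun p' h1 h2 => ih (r - 1) (by simp at hr; omega) p' h1 h2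
    obtain ⟨x, xs, hc⟩ : ∃ x xs, comp bs (r-1) = x :: xs := by
      rcases h' : comp bs (r-1) with _ | ⟨x, xs⟩
      · exact absurd h' hne
      · exact ⟨x, xs, rfl⟩
    have hcomp : comp (b :: bs) r = if b then 1 :: x :: xs else (x+1) :: xs := by
      simp [comp, hc]
    rw [hc] at hmem
    have hx1 : 1 ≤ x := (hmem x (by simp)).1
    rw [hcomp]
    cases b with
    | true =>
      rw [if_pos rfl]
      rcases Nat.eq_or_lt_of_le hp1 with h1 | h1
      · constructor
        · intro _; simp [← h1]
        · intro _; exact ⟨1, by simp [← h1]⟩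
      · -- p ≥ 2
        have key : (∃ t, ((1 :: x :: xs).take t).sum = p) ↔
            (∃ t, ((x :: xs).take t).sum = p - 1) := by
          constructor
          · rintro ⟨t, ht⟩
            match t with
            | 0 => simp at ht; omega
            | t + 1 =>
              refine ⟨t, ?_⟩
              simp [List.take_succ_cons] at ht
              omega
          · rintro ⟨t, ht⟩
            exact ⟨t + 1, by simp [List.take_succ_cons]; omega⟩
        rw [key, ← hc, IH (p - 1) (by omega) (by simp at hp2 ⊢; omega)]
        rcases p with _ | _ | p
        · omega
        · omega
        · simp
    | false =>
      rw [if_neg (by simp)]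
      rcases Nat.eq_or_lt_of_le hp1 with h1 | h1
      · -- p = 1 : both false
        constructor
        · rintro ⟨t, ht⟩
          match t with
          | 0 => simp at ht; omega
          | t + 1 =>
            simp [List.take_succ_cons] at ht
            have : ((xs.take t).sum : ℕ) ≥ 0 := Nat.zero_le _
            omega
        · intro h; simp [← h1] at h
      · have key : (∃ t, (((x+1) :: xs).take t).sum = p) ↔
            (∃ t, ((x :: xs).take t).sum = p - 1) := by
          constructor
          · rintro ⟨t, ht⟩
            match t with
            | 0 => simp at ht; omega
            | t + 1 =>
              refine ⟨t + 1, ?_⟩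
              simp [List.take_succ_cons] at ht ⊢
              omega
          · rintro ⟨t, ht⟩
            match t with
            | 0 => simp at ht; omega
            | t + 1 =>
              refine ⟨t + 1, ?_⟩
              simp [List.take_succ_cons] at ht ⊢
              omega
        rw [key, ← hc, IH (p - 1) (by omega) (by simp at hp2 ⊢; omega)]
        rcases p with _ | _ | p
        · omega
        · omega
        · simp

lemma char {α : Type*} (S : List α) (hS : 0 < S.length) (j : ℕ) (hj : j < S.length)
    (hchar : ∀ o (h : o < S.length), 1 ≤ o → o ≤ j → S.get ⟨o, h⟩ ≠ S.get ⟨0, hS⟩) :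
    ∀ (q : List ℕ), (∀ x ∈ q, 1 ≤ x ∧ x ≤ j + 1) →
      ∀ p (hp : p < (q.map S.take).flatten.length),
        ((q.map S.take).flatten.get ⟨p, hp⟩ = S.get ⟨0, hS⟩ ↔ ∃ t, (q.take t).sum = p) := by
  intro q
  induction q with
  | nil => intro _ p hp; simp at hp
  | cons x q ih =>
    intro hq p hp
    have hx := hq x (by simp)
    have hxS : x ≤ S.length := by omega
    have hlt : (S.take x).length = x := by simp; omega
    have hflat : ((x :: q).map S.take).flatten = S.take x ++ (q.map S.take).flatten := by
      simp
    have hp2 : p < x + (q.map S.take).flatten.length := by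
      have := hp
      rw [hflat, List.length_append, hlt] at this
      omega
    rcases lt_or_ge p x with h | h
    · -- inside first block
      have hget : ((x :: q).map S.take).flatten.get ⟨p, hp⟩ = S.get ⟨p, by omega⟩ := by
        rw [List.get_of_eq hflat]
        simp only [List.get_eq_getElem]
        rw [List.getElem_append_left (by omega), List.getElem_take]
      rw [hget]
      rcases Nat.eq_zero_or_pos p with rfl | hp1
      · simp
        exact ⟨0, by simp⟩
      · constructor
        · intro hcon
          exact absurd hcon (hchar p (by omega) hp1 (by omega))
        · rintro ⟨t, ht⟩
          match t with
          | 0 => simp at ht; omega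
          | t + 1 =>
            simp [List.take_succ_cons] at ht
            omega
    · -- inside later blocks
      have hp' : p - x < ((q.map S.take).flatten).length := by omega
      have hget : ((x :: q).map S.take).flatten.get ⟨p, hp⟩ =
          ((q.map S.take).flatten).get ⟨p - x, hp'⟩ := by
        rw [List.get_of_eq hflat]
        simp only [List.get_eq_getElem]
        rw [List.getElem_append_right (by omega)]
        congr 1
        omega
      rw [hget, ih (fun y hy => hq y (by simp [hy])) (p - x) hp']
      constructor
      · rintro ⟨t, ht⟩
        refine ⟨t + 1, ?_⟩
        simp [List.take_succ_cons]
        omega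
      · rintro ⟨t, ht⟩
        match t with
        | 0 => simp at ht; omega
        | t + 1 =>
          refine ⟨t, ?_⟩
          simp [List.take_succ_cons] at ht
          omega

lemma length_le_sum (l : List ℕ) (h : ∀ x ∈ l, 1 ≤ x) : l.length ≤ l.sum := by
  induction l with
  | nil => simp
  | cons x l ih =>
    have := h x (by simp)
    have := ih (fun y hy => h y (by simp [hy]))
    simp
    omega

end GeneratedAux

theorem generated_strings_count {α : Type*} (n j i : ℕ) (hn : 1 ≤ n) (hj : 1 ≤ j)
    (S : List α) (hS : Unbordered S) (hlen : S.length = i)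
    (hi1 : (n + 1) / 2 ≤ i) (hi2 : i + j < n)
    (hfirst : ∀ m : ℕ, 1 ≤ m → m ≤ j → (h : m < S.length) →
      S.get ⟨m, h⟩ ≠ S.get ⟨0, by omega⟩) :
    2 ^ j ≤ Set.ncard {T : List α | T.length = n ∧
      ∃ L : List (List α), L ≠ [] ∧ (∀ P ∈ L, P ≠ [] ∧ P <+: S) ∧ T = S ++ L.flatten} := by
  classical
  set T : Set (List α) := {T : List α | T.length = n ∧
      ∃ L : List (List α), L ≠ [] ∧ (∀ P ∈ L, P ≠ [] ∧ P <+: S) ∧ T = S ++ L.flatten} with hT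
  set d : ℕ := n - i with hd
  have hd1 : j + 1 ≤ d := by omega
  have hd2 : d ≤ i := by omega
  have hji : j + 1 ≤ i := by omega
  have hS0 : 0 < S.length := by omega
  set bits : Finset (Fin j) → List Bool :=
    fun A => (List.finRange j).map (fun m => decide (m ∈ A)) with hbits
  have hbl : ∀ A, (bits A).length = j := by intro A; simp [hbits]
  have hbget : ∀ (A) (m : Fin j), (bits A).getD (m : ℕ) false = decide (m ∈ A) := by
    intro A m
    rw [List.getD_eq_getElem _ _ (by rw [hbl]; exact m.2)]
    simp [hbits]
  set q : Finset (Fin j) → List ℕ := fun A => GeneratedAux.comp (bits A) d with hq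
  have hrA : ∀ A, (bits A).length + 1 ≤ d := by intro A; rw [hbl]; omega
  have hqmem : ∀ A, ∀ x ∈ q A, 1 ≤ x ∧ x ≤ j + 1 := by
    intro A x hx
    have := GeneratedAux.comp_mem (bits A) d (hrA A) x hx
    rw [hbl] at this
    exact this
  have hqsum : ∀ A, (q A).sum = d := fun A => GeneratedAux.comp_sum _ _ (hrA A)
  set W : Finset (Fin j) → List α := fun A => ((q A).map S.take).flatten with hW
  have hWlen : ∀ A, (W A).length = d := by
    intro A
    have hmap : ((q A).map S.take).map List.length = (q A).map (fun x => x) := by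
      rw [List.map_map]
      apply List.map_congr_left
      intro x hx
      have := hqmem A x hx
      simp [Function.comp]
      omega
    rw [hW]
    simp only [List.length_flatten, hmap, List.map_id']
    exact hqsum A
  set f : Finset (Fin j) → List α := fun A => S ++ W A with hf
  -- membership
  have hmem : ∀ A, f A ∈ T := by
    intro A
    refine ⟨by simp [hf, hlen, hWlen A]; omega, (q A).map S.take, ?_, ?_, rfl⟩
    · simp only [ne_eq, List.map_eq_nil_iff]
      exact GeneratedAux.comp_ne_nil _ _ (hrA A)
    · intro P hP
      simp only [List.mem_map] at hP
      obtain ⟨x, hx, rfl⟩ := hP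
      have h1 := hqmem A x hx
      constructor
      · apply List.ne_nil_of_length_pos
        simp
        omega
      · exact List.take_prefix _ _
  -- the characteristic property
  have hkey : ∀ (A : Finset (Fin j)) (m : Fin j) (hp : (m : ℕ) + 1 < (W A).length),
      ((W A).get ⟨(m : ℕ) + 1, hp⟩ = S.get ⟨0, hS0⟩ ↔ m ∈ A) := by
    intro A m hp
    have hchar := GeneratedAux.char S hS0 j (by omega)
      (fun o h h1 h2 => hfirst o h1 h2 h) (q A) (hqmem A) ((m : ℕ) + 1) hp
    rw [hchar]
    have := GeneratedAux.comp_sums (bits A) d (hrA A) ((m : ℕ) + 1) (by omega)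
      (by rw [hbl]; omega)
    rw [show q A = GeneratedAux.comp (bits A) d from rfl, this]
    simp only [Nat.add_sub_cancel, hbget A m]
    simp
  -- injectivity
  have hinj : Function.Injective f := by
    intro A B hAB
    have hWeq : W A = W B := List.append_cancel_left hAB
    ext m
    have hpA : (m : ℕ) + 1 < (W A).length := by rw [hWlen]; have := m.2; omega
    have hpB : (m : ℕ) + 1 < (W B).length := by rw [hWlen]; have := m.2; omega
    rw [← hkey A m hpA, ← hkey B m hpB, List.get_of_eq hWeq]
  -- finiteness of T
  have hfin : T.Finite := by
    set g : List (Fin (i+1)) → List α :=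
      fun c => S ++ (c.map (fun x => S.take x.val)).flatten with hg
    have hsub : T ⊆ g '' {c | c.length ≤ n} := by
      rintro t ⟨htlen, L, hLne, hLmem, rfl⟩
      have hPlen : ∀ P ∈ L, P.length < i + 1 := by
        intro P hP
        have := (hLmem P hP).2.length_le
        omega
      refine ⟨L.attach.map (fun P => (⟨P.1.length, hPlen P.1 P.2⟩ : Fin (i+1))), ?_, ?_⟩
      · show (L.attach.map _).length ≤ n
        rw [List.length_map, List.length_attach]
        have h1 : ∀ x ∈ L.map List.length, 1 ≤ x := by
          intro x hx
          simp only [List.mem_map] at hx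
          obtain ⟨P, hP, rfl⟩ := hx
          exact List.length_pos_iff.mpr (hLmem P hP).1
        have h2 := GeneratedAux.length_le_sum _ h1
        rw [List.length_map] at h2
        have h3 : (S ++ L.flatten).length = n := htlen
        rw [List.length_append, List.length_flatten] at h3
        omega
      · show S ++ _ = S ++ L.flatten
        congr 1
        rw [List.map_map]
        have : ((fun x : Fin (i+1) => S.take x.val) ∘
            (fun P : {x // x ∈ L} => (⟨P.1.length, hPlen P.1 P.2⟩ : Fin (i+1)))) =
            fun P : {x // x ∈ L} => S.take P.1.length := rfl
        rw [this]
        have hmapeq : L.attach.map (fun P : {x // x ∈ L} => S.take P.1.length) =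
            L.attach.map (fun P => P.1) := by
          apply List.map_congr_left
          intro P _
          exact (List.prefix_iff_eq_take.mp (hLmem P.1 P.2).2).symm
        rw [hmapeq, List.attach_map_subtype_val]
    exact ((List.finite_length_le (Fin (i+1)) n).image g).subset hsub
  -- count
  calc 2 ^ j = Nat.card (Finset (Fin j)) := by
        simp [Nat.card_eq_fintype_card]
    _ = (Set.univ : Set (Finset (Fin j))).ncard := by rw [Set.ncard_univ]
    _ = (f '' Set.univ).ncard := (Set.ncard_image_of_injective _ hinj).symm
    _ ≤ T.ncard := Set.ncard_le_ncard (by rintro _ ⟨A, -, rfl⟩; exact hmem A) hfin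
end

section
/- Let A be a finite alphabet of size σ ≥ 2, let n ≥ 4, and let i be an integer with ⌈n/2⌉ ≤ i ≤ n − 2. Then the number of strings T ∈ A^n whose maximal unbordered factor has length at least i, i.e. b(T) ≥ i, is at least b(i, σ) + Σ_{j=1}^{n−i−1} 2^{j−1} · b_j(i, σ). -/
open List Finset Filter

/-- `unbCountJ σ i j` : the number of unbordered strings of length `i` over an alphabet
of size `σ` whose first letter differs from each of the `j` letters that follow it. -/
noncomputable def unbCountJ (σ i j : ℕ) : ℕ :=
  Nat.card {f : Fin i → Fin σ //
    Unbordered (List.ofFn f) ∧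
    ∀ k l : Fin i, 1 ≤ (k : ℕ) → (k : ℕ) ≤ j → (l : ℕ) = 0 → f k ≠ f l}

/-- If `T` has an unbordered factor of length `k`, then `muf T ≥ k`. -/
lemma le_muf_of_infix {α : Type*} {F T : List α} (h : F <:+: T) (hu : Unbordered F) :
    F.length ≤ muf T := by
  apply le_csSup
  · refine ⟨T.length, ?_⟩
    rintro k ⟨G, hG, -, rfl⟩
    exact hG.length_le
  · exact ⟨F, h, hu, rfl⟩

/-- concatenation of two functions into `Fin n`. -/
def pad {σ i n : ℕ} (hin : i ≤ n) (g : Fin i → Fin σ) (v : Fin (n - i) → Fin σ) :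
    Fin n → Fin σ :=
  fun k => if h : (k : ℕ) < i then g ⟨k, h⟩ else v ⟨(k : ℕ) - i, by omega⟩

lemma ofFn_pad {σ i n : ℕ} (hin : i ≤ n) (g : Fin i → Fin σ) (v : Fin (n - i) → Fin σ) :
    List.ofFn (pad hin g v) = List.ofFn g ++ List.ofFn v := by
  apply List.ext_getElem
  · simp; omega
  · intro k h1 h2
    simp only [List.getElem_ofFn]
    by_cases hk : k < i
    · rw [List.getElem_append_left (by simpa using hk)]
      simp [pad, hk]
    · rw [List.getElem_append_right (by simpa using hk)]
      simp only [List.getElem_ofFn]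
      simp [pad, hk]

lemma unbCountJ_le (σ i j : ℕ) : unbCountJ σ i j ≤ unbCount σ i := by
  apply Nat.card_le_card_of_injective (fun x => (⟨x.1, x.2.1⟩ :
      {f : Fin i → Fin σ // Unbordered (List.ofFn f)}))
  intro a b h
  have h2 := congrArg Subtype.val h
  exact Subtype.ext h2

lemma sum_pow_le (K : ℕ) : ∑ j ∈ Finset.Icc 1 K, 2 ^ (j - 1) ≤ 2 ^ K - 1 := by
  induction K with
  | zero => simp
  | succ K ih =>
    rw [Finset.sum_Icc_succ_top (by omega)]
    have h1 : (1:ℕ) ≤ 2 ^ K := Nat.one_le_two_pow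
    calc (∑ j ∈ Finset.Icc 1 K, 2 ^ (j - 1)) + 2 ^ (K + 1 - 1)
        ≤ (2 ^ K - 1) + 2 ^ K := by gcongr <;> omega
      _ ≤ 2 ^ (K + 1) - 1 := by rw [pow_succ]; omega

theorem count_muf_ge_i (σ n i : ℕ) (hσ : 2 ≤ σ) (hn : 4 ≤ n)
    (hi1 : (n + 1) / 2 ≤ i) (hi2 : i ≤ n - 2) :
    unbCount σ i + ∑ j ∈ Finset.Icc 1 (n - i - 1), 2 ^ (j - 1) * unbCountJ σ i j ≤
      Nat.card {f : Fin n → Fin σ // i ≤ muf (List.ofFn f)} := by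
  have hin : i ≤ n := by omega
  set b := unbCount σ i with hb
  -- Step 1 : bound the LHS by `b * 2 ^ (n - i - 1)`
  have h1 : unbCount σ i + ∑ j ∈ Finset.Icc 1 (n - i - 1), 2 ^ (j - 1) * unbCountJ σ i j
      ≤ b * 2 ^ (n - i - 1) := by
    have hsum : ∑ j ∈ Finset.Icc 1 (n - i - 1), 2 ^ (j - 1) * unbCountJ σ i j
        ≤ (2 ^ (n - i - 1) - 1) * b := by
      calc ∑ j ∈ Finset.Icc 1 (n - i - 1), 2 ^ (j - 1) * unbCountJ σ i j
          ≤ ∑ j ∈ Finset.Icc 1 (n - i - 1), 2 ^ (j - 1) * b := by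
            apply Finset.sum_le_sum
            intro j _
            exact Nat.mul_le_mul_left _ (unbCountJ_le σ i j)
        _ = (∑ j ∈ Finset.Icc 1 (n - i - 1), 2 ^ (j - 1)) * b := by
            rw [Finset.sum_mul]
        _ ≤ (2 ^ (n - i - 1) - 1) * b := by
            exact Nat.mul_le_mul_right _ (sum_pow_le _)
    have h2 : (1:ℕ) ≤ 2 ^ (n - i - 1) := Nat.one_le_two_pow
    calc unbCount σ i + ∑ j ∈ Finset.Icc 1 (n - i - 1), 2 ^ (j - 1) * unbCountJ σ i j
        ≤ b + (2 ^ (n - i - 1) - 1) * b := by rw [hb]; exact Nat.add_le_add_left hsum _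
      _ = b * 2 ^ (n - i - 1) := by
          rcases Nat.exists_eq_add_of_le h2 with ⟨c, hc⟩
          rw [hc, Nat.add_sub_cancel_left]
          ring
  -- Step 2 : `b * 2^(n-i-1) ≤ b * σ^(n-i)`
  have h2 : b * 2 ^ (n - i - 1) ≤ b * σ ^ (n - i) := by
    apply Nat.mul_le_mul_left
    calc (2:ℕ) ^ (n - i - 1) ≤ 2 ^ (n - i) := Nat.pow_le_pow_right (by norm_num) (by omega)
      _ ≤ σ ^ (n - i) := Nat.pow_le_pow_left hσ _
  -- Step 3 : `b * σ^(n-i) ≤ RHS` via the injection `(g, v) ↦ pad g v`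
  have h3 : b * σ ^ (n - i) ≤ Nat.card {f : Fin n → Fin σ // i ≤ muf (List.ofFn f)} := by
    have hcard : b * σ ^ (n - i) =
        Nat.card ({g : Fin i → Fin σ // Unbordered (List.ofFn g)} ×
          (Fin (n - i) → Fin σ)) := by
      simp [hb, unbCount, Nat.card_prod, Nat.card_fun]
    rw [hcard]
    apply Nat.card_le_card_of_injective
      (fun x => (⟨pad hin x.1.1 x.2, by
        have hpre : List.ofFn x.1.1 <+: List.ofFn (pad hin x.1.1 x.2) :=
          ⟨List.ofFn x.2, (ofFn_pad hin x.1.1 x.2).symm⟩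
        have := le_muf_of_infix hpre.isInfix x.1.2
        simpa using this⟩ : {f : Fin n → Fin σ // i ≤ muf (List.ofFn f)}))
    rintro ⟨⟨g, hg⟩, v⟩ ⟨⟨g', hg'⟩, v'⟩ h
    have h' : pad hin g v = pad hin g' v' := congrArg Subtype.val h
    have hgg : g = g' := by
      funext k
      have := congrFun h' ⟨(k : ℕ), by omega⟩
      simpa [pad, k.isLt] using this
    have hvv : v = v' := by
      funext t
      have ht : (t : ℕ) < n - i := t.isLt
      have := congrFun h' ⟨i + (t : ℕ), by omega⟩
      simp only [pad] at this
      rw [dif_neg (by omega), dif_neg (by omega)] at this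
      simpa using this
    simp [hgg, hvv]
  omega
end

section
/- For every integer m ≥ 0, the string S = a^m b a^{m+1} b a^m b a^{m+2} b a^m b a^{m+1} b a^m over the two-letter alphabet {a, b} (of length n = 7m + 10) has maximal unbordered factor of length exactly 3m + 6, i.e. b(S) = 3m + 6. -/
open List Finset Filter

/-- The string of the theorem. -/
def SS (m : ℕ) : List (Fin 2) :=
  List.replicate m 0 ++ [1] ++ List.replicate (m + 1) 0 ++ [1] ++
      List.replicate m 0 ++ [1] ++ List.replicate (m + 2) 0 ++ [1] ++
      List.replicate m 0 ++ [1] ++ List.replicate (m + 1) 0 ++ [1] ++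
      List.replicate m 0

/-- Positions of the letter `b` (i.e. `1`) in `SS m`. -/
def C (m i : ℕ) : Prop :=
  i = m ∨ i = 2*m+2 ∨ i = 3*m+3 ∨ i = 4*m+6 ∨ i = 5*m+7 ∨ i = 6*m+9

instance (m i : ℕ) : Decidable (C m i) := by unfold C; infer_instance

lemma SS_length (m : ℕ) : (SS m).length = 7*m+10 := by
  simp [SS]; ring

lemma get_block (a : ℕ) (rest : List (Fin 2)) (i : ℕ) (h : i < a + 1 + rest.length) :
    (List.replicate a (0:Fin 2) ++ ([1] ++ rest))[i]'(by simp; omega) =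
      if ha : i < a then 0 else if hb : i = a then 1
      else rest[i - (a+1)]'(by omega) := by
  rcases lt_trichotomy i a with hlt | heq | hgt
  · rw [List.getElem_append_left (by simpa using hlt), List.getElem_replicate, dif_pos hlt]
  · subst heq
    rw [List.getElem_append_right (by simp), dif_neg (by omega), dif_pos rfl]
    simp
  · rw [List.getElem_append_right (by simpa using hgt.le), dif_neg (by omega), dif_neg (by omega)]
    rw [List.getElem_append_right (by simp; omega)]
    congr 1
    simp; omega

lemma SS_getElem (m i : ℕ) (h : i < (SS m).length) :
    (SS m)[i] = if C m i then (1 : Fin 2) else 0 := by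
  have h7 : i < 7*m+10 := by rwa [SS_length] at h
  have e : SS m = List.replicate m (0:Fin 2) ++ ([1] ++ (List.replicate (m + 1) 0 ++ ([1] ++
      (List.replicate m 0 ++ ([1] ++ (List.replicate (m + 2) 0 ++ ([1] ++
      (List.replicate m 0 ++ ([1] ++ (List.replicate (m + 1) 0 ++ ([1] ++
      List.replicate m 0))))))))))) := by
    simp [SS]
  simp only [e]
  rw [get_block (h := by simp; omega)]
  by_cases h1 : i < m
  · rw [dif_pos h1, if_neg (by unfold C; omega)]
  rw [dif_neg h1]
  by_cases h2 : i = m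
  · rw [dif_pos h2, if_pos (by unfold C; omega)]
  rw [dif_neg h2, get_block (h := by simp; omega)]
  by_cases h3 : i - (m+1) < m+1
  · rw [dif_pos h3, if_neg (by unfold C; omega)]
  rw [dif_neg h3]
  by_cases h4 : i - (m+1) = m+1
  · rw [dif_pos h4, if_pos (by unfold C; omega)]
  rw [dif_neg h4, get_block (h := by simp; omega)]
  by_cases h5 : i - (m+1) - (m+1+1) < m
  · rw [dif_pos h5, if_neg (by unfold C; omega)]
  rw [dif_neg h5]
  by_cases h6 : i - (m+1) - (m+1+1) = m
  · rw [dif_pos h6, if_pos (by unfold C; omega)]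
  rw [dif_neg h6, get_block (h := by simp; omega)]
  by_cases h7' : i - (m+1) - (m+1+1) - (m+1) < m+2
  · rw [dif_pos h7', if_neg (by unfold C; omega)]
  rw [dif_neg h7']
  by_cases h8 : i - (m+1) - (m+1+1) - (m+1) = m+2
  · rw [dif_pos h8, if_pos (by unfold C; omega)]
  rw [dif_neg h8, get_block (h := by simp; omega)]
  by_cases h9 : i - (m+1) - (m+1+1) - (m+1) - (m+2+1) < m
  · rw [dif_pos h9, if_neg (by unfold C; omega)]
  rw [dif_neg h9]
  by_cases h10 : i - (m+1) - (m+1+1) - (m+1) - (m+2+1) = m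
  · rw [dif_pos h10, if_pos (by unfold C; omega)]
  rw [dif_neg h10, get_block (h := by simp; omega)]
  by_cases h11 : i - (m+1) - (m+1+1) - (m+1) - (m+2+1) - (m+1) < m+1
  · rw [dif_pos h11, if_neg (by unfold C; omega)]
  rw [dif_neg h11]
  by_cases h12 : i - (m+1) - (m+1+1) - (m+1) - (m+2+1) - (m+1) = m+1
  · rw [dif_pos h12, if_pos (by unfold C; omega)]
  rw [dif_neg h12, List.getElem_replicate, if_neg (by unfold C; omega)]

set_option maxHeartbeats 2000000 in
/-- Core combinatorial lemma: any factor of `SS m` of length `≥ 3m+7`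
(starting at position `p`, of length `L`) has a border, described by
matching letter positions. -/
lemma core (m p L : ℕ) (hL : 3*m+7 ≤ L) (hpL : p + L ≤ 7*m+10) :
    ∃ ℓ, 0 < ℓ ∧ ℓ < L ∧ ∀ j, j < ℓ → (C m (p+j) ↔ C m (p+(L-ℓ)+j)) := by
  by_cases hp : C m p <;> by_cases he : C m (p + L - 1) <;> unfold C at hp he
  · exact ⟨1, by omega, by omega, fun j hj => by unfold C; omega⟩
  · by_cases hs : p = 2*m+2 ∧ p + L - 1 = 6*m+8
    · exact ⟨2*m+3, by omega, by omega, fun j hj => by unfold C; omega⟩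
    by_cases r1 : p + L - 1 ≤ 5*m+6
    · exact ⟨(p+L-1) - (4*m+6) + 1, by omega, by omega, fun j hj => by unfold C; omega⟩
    by_cases r2 : p + L - 1 ≤ 6*m+8
    · exact ⟨(p+L-1) - (5*m+7) + 1, by omega, by omega, fun j hj => by unfold C; omega⟩
    · exact ⟨(p+L-1) - (6*m+9) + 1, by omega, by omega, fun j hj => by unfold C; omega⟩
  · by_cases hs : p = m+1 ∧ p + L - 1 = 5*m+7
    · exact ⟨2*m+3, by omega, by omega, fun j hj => by unfold C; omega⟩
    by_cases r1 : p ≤ m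
    · exact ⟨m - p + 1, by omega, by omega, fun j hj => by unfold C; omega⟩
    by_cases r2 : p ≤ 2*m+1
    · exact ⟨2*m+2 - p + 1, by omega, by omega, fun j hj => by unfold C; omega⟩
    · exact ⟨3*m+3 - p + 1, by omega, by omega, fun j hj => by unfold C; omega⟩
  · exact ⟨1, by omega, by omega, fun j hj => by unfold C; omega⟩

lemma getElem_of_infix {α : Type*} {pre F post S : List α} (hS : pre ++ F ++ post = S)
    (j : ℕ) (hj : j < F.length) (hi : pre.length + j < S.length) :
    S[pre.length + j] = F[j] := by
  subst hS
  rw [List.getElem_append_left (by simp; omega), List.getElem_append_right (by simp)]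
  congr 1
  omega

/-- The unbordered factor of length `3m+6`: `b a^{m+1} b a^m b a^{m+2}`. -/
def F0 (m : ℕ) : List (Fin 2) :=
  [1] ++ List.replicate (m+1) 0 ++ [1] ++ List.replicate m 0 ++ [1] ++
    List.replicate (m+2) 0

lemma F0_length (m : ℕ) : (F0 m).length = 3*m+6 := by
  simp [F0]; ring

lemma SS_split (m : ℕ) :
    List.replicate m (0:Fin 2) ++ F0 m ++
      ([1] ++ List.replicate m 0 ++ [1] ++ List.replicate (m+1) 0 ++ [1] ++
        List.replicate m 0) = SS m := by
  simp [SS, F0]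

lemma F0_getElem (m i : ℕ) (h : i < (F0 m).length) :
    (F0 m)[i] = if i = 0 ∨ i = m+2 ∨ i = 2*m+3 then (1 : Fin 2) else 0 := by
  have h6 : i < 3*m+6 := by rwa [F0_length] at h
  have e := getElem_of_infix (SS_split m) i h (by rw [SS_length]; simp; omega)
  rw [← e, SS_getElem]
  simp only [List.length_replicate]
  by_cases hc : C m (m + i)
  · rw [if_pos hc, if_pos (by unfold C at hc; omega)]
  · rw [if_neg hc, if_neg (by unfold C at hc; omega)]

lemma F0_unbordered (m : ℕ) : Unbordered (F0 m) := by
  intro B hne hlt hpre hsuf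
  have hlen : (F0 m).length = 3*m+6 := F0_length m
  have hℓpos : 0 < B.length := List.length_pos_iff.mpr hne
  have hℓlt : B.length < 3*m+6 := hlen ▸ hlt
  have heq : (F0 m).take B.length = (F0 m).drop ((F0 m).length - B.length) :=
    (List.prefix_iff_eq_take.mp hpre).symm.trans (List.suffix_iff_eq_drop.mp hsuf)
  by_cases hc : B.length = m+3 ∨ B.length = 2*m+4
  · have e1 : ((F0 m).take B.length)[m+2]'(by simp [hlen]; omega) =
        ((F0 m).drop ((F0 m).length - B.length))[m+2]'(by simp [hlen]; omega) := by
      simp only [heq]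
    rw [List.getElem_take, List.getElem_drop, F0_getElem, F0_getElem] at e1
    simp only [hlen] at e1
    have hL : m + 2 = 0 ∨ True ∨ m + 2 = 2*m+3 := Or.inr (Or.inl trivial)
    have hR : ¬(3*m+6 - B.length + (m+2) = 0 ∨ 3*m+6 - B.length + (m+2) = m+2 ∨
        3*m+6 - B.length + (m+2) = 2*m+3) := by
      rcases hc with h | h <;> rw [h] <;> omega
    rw [if_pos hL, if_neg hR] at e1
    exact absurd e1 (by decide)
  · have e1 : ((F0 m).take B.length)[0]'(by simp [hlen]; omega) =
        ((F0 m).drop ((F0 m).length - B.length))[0]'(by simp [hlen]; omega) := by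
      simp only [heq]
    rw [List.getElem_take, List.getElem_drop, F0_getElem, F0_getElem] at e1
    simp only [hlen] at e1
    have hL : True ∨ (0:ℕ) = m+2 ∨ (0:ℕ) = 2*m+3 := Or.inl trivial
    have hR : ¬(3*m+6 - B.length + 0 = 0 ∨ 3*m+6 - B.length + 0 = m+2 ∨
        3*m+6 - B.length + 0 = 2*m+3) := by omega
    rw [if_pos hL, if_neg hR] at e1
    exact absurd e1 (by decide)

lemma ub_of_unbordered (m : ℕ) (F : List (Fin 2)) (hinf : F <:+: SS m)
    (hunb : Unbordered F) : F.length ≤ 3*m+6 := by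
  by_contra hgt
  push_neg at hgt
  obtain ⟨pre, post, hS⟩ := hinf
  have hlen : pre.length + F.length + post.length = 7*m+10 := by
    have := congrArg List.length hS
    simp [SS_length] at this
    omega
  obtain ⟨ℓ, hℓ0, hℓL, hmatch⟩ := core m pre.length F.length (by omega) (by omega)
  have hkey : F.take ℓ = F.drop (F.length - ℓ) := by
    apply List.ext_getElem (by simp; omega)
    intro j hj1 hj2
    have hjℓ : j < ℓ := by simp at hj1; omega
    rw [List.getElem_take, List.getElem_drop]
    have e1 : (SS m)[pre.length + j]'(by rw [SS_length]; omega) = F[j]'(by omega) :=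
      getElem_of_infix hS j (by omega) (by rw [SS_length]; omega)
    have e2 : (SS m)[pre.length + (F.length - ℓ + j)]'(by rw [SS_length]; omega) =
        F[F.length - ℓ + j]'(by omega) :=
      getElem_of_infix hS _ (by omega) (by rw [SS_length]; omega)
    rw [← e1, ← e2, SS_getElem, SS_getElem]
    have hidx : pre.length + (F.length - ℓ + j) = pre.length + (F.length - ℓ) + j := by
      omega
    rw [hidx]
    exact if_congr (hmatch j hjℓ) rfl rfl
  exact hunb (F.take ℓ) (List.length_pos_iff.mp (by simp; omega)) (by simp; omega)
    (List.take_prefix ℓ F) (by rw [hkey]; exact List.drop_suffix _ _)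

theorem counterexample_muf (m : ℕ) :
    muf ((List.replicate m 0 ++ [1] ++ List.replicate (m + 1) 0 ++ [1] ++
      List.replicate m 0 ++ [1] ++ List.replicate (m + 2) 0 ++ [1] ++
      List.replicate m 0 ++ [1] ++ List.replicate (m + 1) 0 ++ [1] ++
      List.replicate m 0 : List (Fin 2))) = 3 * m + 6 := by
  show muf (SS m) = 3 * m + 6
  have hmem : (3*m+6) ∈ {k | ∃ F : List (Fin 2), F <:+: SS m ∧ Unbordered F ∧
      F.length = k} :=
    ⟨F0 m, ⟨_, _, SS_split m⟩, F0_unbordered m, F0_length m⟩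
  have hub : ∀ k ∈ {k | ∃ F : List (Fin 2), F <:+: SS m ∧ Unbordered F ∧
      F.length = k}, k ≤ 3*m+6 := by
    rintro k ⟨F, hinf, hunb, rfl⟩
    exact ub_of_unbordered m F hinf hunb
  exact le_antisymm (csSup_le ⟨_, hmem⟩ hub) (le_csSup ⟨3*m+6, hub⟩ hmem)
end

section
/- For every integer m ≥ 0, the string S = a^m b a^{m+1} b a^m b a^{m+2} b a^m b a^{m+1} b a^m over the two-letter alphabet {a, b} (of length n = 7m + 10) has minimal period π(S) = 4m + 7. -/
open List Finset Filter

/-- `p` is a period of `S` : `0 < p` and `S[i] = S[i+p]` whenever both are defined. -/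
def IsPeriod {α : Type*} (S : List α) (p : ℕ) : Prop :=
  0 < p ∧ ∀ i : ℕ, (h : i + p < S.length) → S.get ⟨i, by omega⟩ = S.get ⟨i + p, h⟩

/-- The minimal period of `S`. -/
noncomputable def minPeriod {α : Type*} (S : List α) : ℕ :=
  sInf {p | IsPeriod S p}

def myS (m : ℕ) : List (Fin 2) :=
  List.replicate m 0 ++ [1] ++ List.replicate (m + 1) 0 ++ [1] ++
      List.replicate m 0 ++ [1] ++ List.replicate (m + 2) 0 ++ [1] ++
      List.replicate m 0 ++ [1] ++ List.replicate (m + 1) 0 ++ [1] ++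
      List.replicate m 0

def myf (m i : ℕ) : Fin 2 :=
  if i = m ∨ i = 2*m+2 ∨ i = 3*m+3 ∨ i = 4*m+6 ∨ i = 5*m+7 ∨ i = 6*m+9 then 1 else 0

lemma lenS (m : ℕ) : (myS m).length = 7*m+10 := by
  simp [myS]; omega

lemma aux_get (k : ℕ) (L : List (Fin 2)) (i : ℕ)
    (h : i < ((List.replicate k (0:Fin 2) ++ [1]) ++ L).length) :
    ((List.replicate k (0:Fin 2) ++ [1]) ++ L)[i] =
      if h1 : i < k then 0 else if h2 : i = k then 1 else
        L[i - (k+1)]'(by simp at h; omega) := by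
  split_ifs with h1 h2
  · rw [List.getElem_append_left (by simp; omega)]
    rw [List.getElem_append_left (by simpa using h1)]
    simp
  · subst h2
    rw [List.getElem_append_left (by simp)]
    rw [List.getElem_append_right (by simp)]
    simp
  · rw [List.getElem_append_right (by simp; omega)]
    simp

lemma getS (m i : ℕ) (h : i < 7*m+10) :
    (myS m)[i]'(by rw [lenS]; exact h) = myf m i := by
  have hform : myS m = (List.replicate m (0:Fin 2) ++ [1]) ++ ((List.replicate (m+1) 0 ++ [1]) ++
      ((List.replicate m 0 ++ [1]) ++ ((List.replicate (m+2) 0 ++ [1]) ++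
      ((List.replicate m 0 ++ [1]) ++ ((List.replicate (m+1) 0 ++ [1]) ++
        List.replicate m 0))))) := by
    simp [myS, List.append_assoc]
  simp only [hform]
  rw [aux_get]
  split_ifs with h1 h2
  · unfold myf; rw [if_neg (by omega)]
  · unfold myf; rw [if_pos (by omega)]
  · rw [aux_get]
    split_ifs with h3 h4
    · unfold myf; rw [if_neg (by omega)]
    · unfold myf; rw [if_pos (by omega)]
    · rw [aux_get]
      split_ifs with h5 h6
      · unfold myf; rw [if_neg (by omega)]
      · unfold myf; rw [if_pos (by omega)]
      · rw [aux_get]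
        split_ifs with h7 h8
        · unfold myf; rw [if_neg (by omega)]
        · unfold myf; rw [if_pos (by omega)]
        · rw [aux_get]
          split_ifs with h9 h10
          · unfold myf; rw [if_neg (by omega)]
          · unfold myf; rw [if_pos (by omega)]
          · rw [aux_get]
            split_ifs with h11 h12
            · unfold myf; rw [if_neg (by omega)]
            · unfold myf; rw [if_pos (by omega)]
            · rw [List.getElem_replicate]
              unfold myf; rw [if_neg (by omega)]

lemma per_main (m : ℕ) : IsPeriod (myS m) (4*m+7) := by
  refine ⟨by omega, fun i h => ?_⟩
  rw [lenS] at h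
  simp only [List.get_eq_getElem]
  rw [getS m i (by omega), getS m (i + (4*m+7)) (by omega)]
  unfold myf
  split_ifs with h1 h2 <;> first | rfl | omega

lemma per_lb (m p : ℕ) (hp : IsPeriod (myS m) p) : 4*m+7 ≤ p := by
  obtain ⟨hp0, hper⟩ := hp
  by_contra hlt
  push_neg at hlt
  have e1 := hper m (by rw [lenS]; omega)
  have e2 := hper (2*m+2) (by rw [lenS]; omega)
  simp only [List.get_eq_getElem] at e1 e2
  rw [getS m m (by omega), getS m (m+p) (by omega)] at e1
  rw [getS m (2*m+2) (by omega), getS m (2*m+2+p) (by omega)] at e2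
  unfold myf at e1 e2
  rw [if_pos (by omega)] at e1
  rw [if_pos (by omega)] at e2
  have c1 : m+p = m ∨ m+p = 2*m+2 ∨ m+p = 3*m+3 ∨ m+p = 4*m+6 ∨ m+p = 5*m+7 ∨ m+p = 6*m+9 := by
    by_contra hc
    rw [if_neg hc] at e1
    exact absurd e1 (by decide)
  have c2 : 2*m+2+p = m ∨ 2*m+2+p = 2*m+2 ∨ 2*m+2+p = 3*m+3 ∨ 2*m+2+p = 4*m+6 ∨
      2*m+2+p = 5*m+7 ∨ 2*m+2+p = 6*m+9 := by
    by_contra hc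
    rw [if_neg hc] at e2
    exact absurd e2 (by decide)
  omega

theorem counterexample_minPeriod (m : ℕ) :
    minPeriod ((List.replicate m 0 ++ [1] ++ List.replicate (m + 1) 0 ++ [1] ++
      List.replicate m 0 ++ [1] ++ List.replicate (m + 2) 0 ++ [1] ++
      List.replicate m 0 ++ [1] ++ List.replicate (m + 1) 0 ++ [1] ++
      List.replicate m 0 : List (Fin 2))) = 4 * m + 7 := by
  show minPeriod (myS m) = 4 * m + 7
  have hmem : IsPeriod (myS m) (4*m+7) := per_main m
  apply _root_.le_antisymm
  · exact Nat.sInf_le hmem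
  · exact le_csInf ⟨_, hmem⟩ fun p hp => per_lb m p hp
end

section
/- Let S be a string of length n over a finite alphabet. If the minimal period of S satisfies π(S) < n/2, then the length of the maximal unbordered factor of S equals the minimal period: b(S) = π(S). -/
/-
Every factor longer than the minimal period `p` inherits period `p`, and a word with a period
smaller than its length is bordered; hence `b(S) ≤ p`. Conversely, let `P` be the prefix of length
`p`. No nontrivial rotation of `P` equals `P`, as it would give `S` a smaller period, and, since
`2p ≤ |S|`, every rotation of `P` is a factor of `S`. Ordering the alphabet arbitrarily, the
lexicographically least rotation `v` of `P` is strictly below its other rotations; a border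
`v = u x = y u` would then give both `u x < u y` and `y u < x u`, which is impossible since
`|x| = |y|`. So `v` is an unbordered factor of length `p`.
-/

open List Finset Filter

namespace List

section Lex

variable {β : Type*} [LinearOrder β]

theorem lt_of_append_lt_append_left {l x y : List β} (h : l ++ x < l ++ y) : x < y := by
  by_contra hxy
  exact append_left_le hxy h

theorem append_lt_append_of_lt_of_length_eq {x y : List β} (hxy : x < y)
    (hlen : x.length = y.length) (z w : List β) : x ++ z < y ++ w := by
  induction x generalizing y with
  | nil => cases y <;> simp_all
  | cons a x ih =>
    cases y with
    | nil => simp at hlen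
    | cons b y =>
      simp only [cons_append, cons_lt_cons_iff, length_cons, Nat.add_right_cancel_iff]
        at hxy hlen ⊢
      exact hxy.imp_right fun ⟨hab, hxy⟩ => ⟨hab, ih hxy hlen⟩

end Lex

section HasPeriod

variable {α : Type*} {S : List α} {p : ℕ}

theorem HasPeriod.getElem?_eq_take_mod (hp : S.HasPeriod p) (hp0 : 0 < p) {i : ℕ}
    (hi : i < S.length) : S[i]? = (S.take p)[i % p]? := by
  rw [getElem?_take_of_lt (Nat.mod_lt i hp0), HasPeriod.getElem?_mod p i S hp hi]

theorem HasPeriod.rotate_take (hp : S.HasPeriod p) {r : ℕ} (hr : r + p ≤ S.length) :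
    (S.take p).rotate r = (S.drop r).take p := by
  rcases Nat.eq_zero_or_pos p with rfl | hp0
  · simp
  refine ext_getElem? fun i => ?_
  rcases lt_or_ge i p with hi | hi
  · rw [getElem?_rotate (by simp; omega), length_take_of_le (by omega),
      ← hp.getElem?_eq_take_mod hp0 (by omega), getElem?_take_of_lt hi, getElem?_drop, add_comm]
  · rw [getElem?_eq_none (by simp; omega), getElem?_eq_none (by simp; omega)]

theorem HasPeriod.rotate_take_infix (hp : S.HasPeriod p) {r : ℕ} (hr : r + p ≤ S.length) :
    (S.take p).rotate r <:+: S :=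
  hp.rotate_take hr ▸ (take_prefix _ _).isInfix.trans (drop_suffix _ _).isInfix

theorem HasPeriod.of_rotate_take_eq (hp : S.HasPeriod p) (hp0 : 0 < p) (hpS : p ≤ S.length)
    {j : ℕ} (hrot : (S.take p).rotate j = S.take p) : S.HasPeriod j := by
  have hP : (S.take p).length = p := length_take_of_le hpS
  rw [hasPeriod_iff_getElem?]
  intro i hi
  calc S[i]? = (S.take p)[i % p]? := hp.getElem?_eq_take_mod hp0 (by omega)
    _ = ((S.take p).rotate j)[i % p]? := by rw [hrot]
    _ = (S.take p)[(i % p + j) % p]? := by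
      rw [getElem?_rotate (by rw [hP]; exact Nat.mod_lt i hp0), hP]
    _ = S[i + j]? := by rw [Nat.mod_add_mod, hp.getElem?_eq_take_mod hp0 (by omega)]

end HasPeriod

end List

open List

section Unbordered

variable {α : Type*}

theorem unbordered_nil : Unbordered ([] : List α) := fun _ _ h => by simp at h

theorem le_muf {F S : List α} (hF : F <:+: S) (hU : Unbordered F) : F.length ≤ muf S :=
  le_csSup ⟨S.length, by rintro _ ⟨G, hG, -, rfl⟩; exact hG.length_le⟩ ⟨F, hF, hU, rfl⟩

theorem muf_le {S : List α} {m : ℕ} (h : ∀ F, F <:+: S → Unbordered F → F.length ≤ m) :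
    muf S ≤ m :=
  csSup_le ⟨0, [], nil_infix, unbordered_nil, rfl⟩ <| by
    rintro _ ⟨F, hF, hU, rfl⟩
    exact h F hF hU

theorem Unbordered.length_le_of_hasPeriod {F : List α} {p : ℕ} (hU : Unbordered F)
    (hp : F.HasPeriod p) (hp0 : 0 < p) : F.length ≤ p := by
  by_contra! hlt
  exact hU (F.drop p) (ne_nil_of_length_pos (by simp; omega)) (by simp; omega)
    (hp.drop_prefix p) (drop_suffix p F)

theorem unbordered_of_forall_lt_rotate [LinearOrder α] {v : List α}
    (hv : ∀ j, 0 < j → j < v.length → v < v.rotate j) : Unbordered v := by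
  rintro u hu hlt ⟨x, hx⟩ ⟨y, hy⟩
  have hu0 : 0 < u.length := length_pos_iff.mpr hu
  have hxv := congrArg length hx
  have hyv := congrArg length hy
  simp only [length_append] at hxv hyv
  have hux : u ++ x < u ++ y :=
    calc u ++ x = v := hx
      _ < v.rotate y.length := hv _ (by omega) (by omega)
      _ = u ++ y := by rw [← hy, rotate_append_length_eq]
  have hyu : y ++ u < x ++ u :=
    calc y ++ u = v := hy
      _ < v.rotate u.length := hv _ hu0 hlt
      _ = x ++ u := by rw [← hx, rotate_append_length_eq]
  have hxy : x < y := lt_of_append_lt_append_left hux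
  exact (append_lt_append_of_lt_of_length_eq hxy (by omega) u u).asymm hyu

end Unbordered

section IsPeriod

variable {α : Type*} {S : List α} {p : ℕ}

theorem isPeriod_iff_hasPeriod : IsPeriod S p ↔ 0 < p ∧ S.HasPeriod p := by
  rw [IsPeriod, hasPeriod_iff_getElem?]
  refine and_congr_right fun _ => forall_congr' fun i => ⟨fun h hi => ?_, fun h hi => ?_⟩
  · rw [getElem?_eq_getElem (by omega), getElem?_eq_getElem (by omega)]
    exact congrArg some (h (by omega))
  · simpa [getElem?_eq_getElem hi, getElem?_eq_getElem (show i < S.length by omega)] using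
      h (by omega)

theorem minPeriod_isPeriod (hS : S ≠ []) : IsPeriod S (minPeriod S) :=
  Nat.sInf_mem (s := {p | IsPeriod S p}) ⟨S.length, length_pos_iff.mpr hS, fun i hi => by omega⟩

theorem minPeriod_le (h : IsPeriod S p) : minPeriod S ≤ p :=
  Nat.sInf_le h

end IsPeriod

section Rotations

variable {α : Type*} {P : List α}

theorem exists_rotate_lt_rotate [LinearOrder α] (hP : P ≠ [])
    (hprim : ∀ j, 0 < j → j < P.length → P.rotate j ≠ P) :
    ∃ r < P.length, ∀ j, 0 < j → j < P.length → P.rotate r < (P.rotate r).rotate j := by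
  have hP0 : 0 < P.length := length_pos_iff.mpr hP
  obtain ⟨r, hr, hmin⟩ :=
    (Finset.range P.length).exists_min_image P.rotate ⟨0, Finset.mem_range.mpr hP0⟩
  refine ⟨r, Finset.mem_range.mp hr, fun j hj hjP =>
    lt_of_le_of_ne ?_ fun h => hprim j hj hjP ?_⟩
  · rw [rotate_rotate, ← rotate_mod P (r + j)]
    exact hmin _ (Finset.mem_range.mpr (Nat.mod_lt _ hP0))
  · rw [rotate_rotate, Nat.add_comm r j, ← rotate_rotate] at h
    exact rotate_eq_rotate.mp h.symm

theorem exists_unbordered_rotate (hP : P ≠ [])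
    (hprim : ∀ j, 0 < j → j < P.length → P.rotate j ≠ P) :
    ∃ r < P.length, Unbordered (P.rotate r) := by
  let := IsWellOrder.linearOrder (WellOrderingRel (α := α))
  obtain ⟨r, hr, hlt⟩ := exists_rotate_lt_rotate hP hprim
  exact ⟨r, hr, unbordered_of_forall_lt_rotate fun j hj hjr => hlt j hj (by simpa using hjr)⟩

end Rotations

section Bounds

variable {α : Type*} {S : List α}

theorem muf_le_of_isPeriod {p : ℕ} (h : IsPeriod S p) : muf S ≤ p := by
  obtain ⟨hp0, hp⟩ := isPeriod_iff_hasPeriod.mp h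
  exact muf_le fun F hF hU => hU.length_le_of_hasPeriod (hp.infix hF) hp0

theorem minPeriod_le_muf (hS : S ≠ []) (h : 2 * minPeriod S ≤ S.length) :
    minPeriod S ≤ muf S := by
  obtain ⟨hp0, hp⟩ := isPeriod_iff_hasPeriod.mp (minPeriod_isPeriod hS)
  set p := minPeriod S
  have hP : (S.take p).length = p := length_take_of_le (by omega)
  have hprim : ∀ j, 0 < j → j < (S.take p).length → (S.take p).rotate j ≠ S.take p := by
    intro j hj hjp hrot
    have hj' : IsPeriod S j :=
      isPeriod_iff_hasPeriod.mpr ⟨hj, hp.of_rotate_take_eq hp0 (by omega) hrot⟩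
    have := minPeriod_le hj'
    omega
  obtain ⟨r, hr, hU⟩ := exists_unbordered_rotate (ne_nil_of_length_pos (by omega)) hprim
  simpa [hP] using le_muf (hp.rotate_take_infix (by omega)) hU

end Bounds

theorem muf_eq_minPeriod_of_small_period {α : Type*} (S : List α)
    (h : (minPeriod S : ℝ) < (S.length : ℝ) / 2) : muf S = minPeriod S := by
  have h2 : 2 * minPeriod S < S.length := by
    have : (2 * minPeriod S : ℝ) < S.length := by linarith
    exact_mod_cast this
  have hS : S ≠ [] := ne_nil_of_length_pos (by omega)
  exact le_antisymm (muf_le_of_isPeriod (minPeriod_isPeriod hS)) (minPeriod_le_muf hS h2.le)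
end

section
/- Fix an alphabet size σ ≥ 2. There exists a constant C > 0 (depending only on σ) such that for all n ≥ 2, Σ_{i=⌈n/2⌉}^{n} i · b(i, σ) ≥ (n·σ/(σ−1)) · b(n, σ) − C·σ^n. -/
open List Finset Filter

/-!
Deleting the middle letter of an unbordered word leaves it unbordered: a border longer than half
a word overlaps itself and so yields a shorter border, hence any border of the shortened word can
be taken of length at most half, and then it avoids the middle and is a border of the original
word. Remembering the deleted letter gives `b(i + 1) ≤ σ b(i)`, so `b(n) σ^(-j) ≤ b(n - j)` and
the weighted sum is at least `b(n) ∑_{j ≤ n/2} (n - j) σ^(-j)`. This differs from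
`n σ / (σ - 1) = ∑_j n σ^(-j)` by at most `2 ∑_j j σ^(-j) ≤ 4`, since `n ≤ 2 j` for every `j`
beyond the range of summation.
-/

namespace List

variable {α : Type*}

theorem drop_eraseIdx_of_le (l : List α) {i j : ℕ} (h : i ≤ j) :
    (l.eraseIdx i).drop j = l.drop (j + 1) := by
  rcases lt_or_ge i l.length with hi | hi
  · rw [eraseIdx_eq_take_drop_succ, drop_append, drop_eq_nil_of_le (by simp; omega), nil_append,
      drop_drop, length_take, min_eq_left hi.le]
    congr 1; omega
  · rw [eraseIdx_of_length_le hi, drop_eq_nil_of_le (by omega), drop_eq_nil_of_le (by omega)]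

theorem take_eq_drop_of_take_eq_drop_of_lt_two_mul {w : List α} {k : ℕ}
    (hk : k ≤ w.length) (hlong : w.length < 2 * k) (heq : w.take k = w.drop (w.length - k)) :
    w.take (2 * k - w.length) = w.drop (w.length - (2 * k - w.length)) :=
  calc w.take (2 * k - w.length)
      = (w.take k).take (2 * k - w.length) := by rw [take_take, min_eq_left (by omega)]
    _ = (w.drop (w.length - k)).take (2 * k - w.length) := by rw [heq]
    _ = (w.take k).drop (w.length - k) := by rw [take_drop]; congr 2; omega
    _ = w.drop (w.length - (2 * k - w.length)) := by rw [heq, drop_drop]; congr 1; omega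

theorem exists_take_eq_drop_of_two_mul_le {w : List α} {k : ℕ} (hk0 : 0 < k)
    (hk : k < w.length) (heq : w.take k = w.drop (w.length - k)) :
    ∃ k', 0 < k' ∧ 2 * k' ≤ w.length ∧ w.take k' = w.drop (w.length - k') := by
  induction k using Nat.strong_induction_on with
  | _ k ih =>
    by_cases hshort : 2 * k ≤ w.length
    · exact ⟨k, hk0, hshort, heq⟩
    · exact ih (2 * k - w.length) (by omega) (by omega) (by omega)
        (take_eq_drop_of_take_eq_drop_of_lt_two_mul hk.le (by omega) heq)

end List

section Unbordered

variable {α : Type*}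

theorem unbordered_iff_take_ne_drop (w : List α) :
    Unbordered w ↔ ∀ k, 0 < k → k < w.length → w.take k ≠ w.drop (w.length - k) := by
  constructor
  · intro h k hk0 hk heq
    refine h (w.take k) ?_ (by simpa) (take_prefix _ _) (heq ▸ drop_suffix _ _)
    rw [ne_eq, ← length_eq_zero_iff, length_take]
    omega
  · intro h B hB0 hB hpre hsuf
    refine h B.length (length_pos_iff.mpr hB0) hB ?_
    rw [← prefix_iff_eq_take.mp hpre, ← suffix_iff_eq_drop.mp hsuf]

theorem Unbordered.eraseIdx_middle {w : List α} (hw : Unbordered w) :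
    Unbordered (w.eraseIdx ((w.length - 1) / 2)) := by
  rw [unbordered_iff_take_ne_drop] at hw ⊢
  have hlen : (w.eraseIdx ((w.length - 1) / 2)).length = w.length - 1 := by
    rw [length_eraseIdx]; split_ifs <;> omega
  intro k hk0 hk heq
  obtain ⟨k', hk'0, hk', heq'⟩ := exists_take_eq_drop_of_two_mul_le hk0 hk heq
  rw [hlen, take_eraseIdx_eq_take_of_le _ _ _ (by omega), drop_eraseIdx_of_le _ (by omega)] at heq'
  exact hw k' hk'0 (by omega) (by rwa [show w.length - 1 - k' + 1 = w.length - k' by omega] at heq')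

instance finite_unbordered_of_length [Finite α] (n : ℕ) :
    Finite {w : List α // w.length = n ∧ Unbordered w} :=
  ((List.finite_length_eq α n).subset fun _ hw => hw.1).to_subtype

def eraseMiddle (n : ℕ) (w : {w : List α // w.length = n + 1 ∧ Unbordered w}) :
    {w : List α // w.length = n ∧ Unbordered w} × α :=
  (⟨w.1.eraseIdx (n / 2), by rw [List.length_eraseIdx_of_lt (by omega), w.2.1]; rfl, by
      simpa only [w.2.1, Nat.add_sub_cancel] using w.2.2.eraseIdx_middle⟩,
    w.1[n / 2]'(by omega))

theorem eraseMiddle_injective (n : ℕ) : Function.Injective (eraseMiddle (α := α) n) := by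
  intro v w h
  simp only [eraseMiddle, Prod.mk.injEq, Subtype.mk.injEq] at h
  apply Subtype.ext
  rw [← List.insertIdx_eraseIdx_getElem (l := v.1) (n := n / 2) (by omega),
    ← List.insertIdx_eraseIdx_getElem (l := w.1) (n := n / 2) (by omega), h.1, h.2]

theorem card_unbordered_succ_le [Finite α] (n : ℕ) :
    Nat.card {w : List α // w.length = n + 1 ∧ Unbordered w} ≤
      Nat.card α * Nat.card {w : List α // w.length = n ∧ Unbordered w} := by
  rw [mul_comm, ← Nat.card_prod]
  exact Nat.card_le_card_of_injective _ (eraseMiddle_injective n)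

end Unbordered

theorem unbCount_eq_card (σ n : ℕ) :
    unbCount σ n = Nat.card {w : List (Fin σ) // w.length = n ∧ Unbordered w} :=
  Nat.card_congr <| ((Equiv.vectorEquivFin (Fin σ) n).symm.subtypeEquiv fun f => by
    rw [← List.Vector.toList_ofFn]; rfl).trans (Equiv.subtypeSubtypeEquivSubtypeInter _ _)

theorem unbCount_succ_le (σ n : ℕ) : unbCount σ (n + 1) ≤ σ * unbCount σ n := by
  simpa only [unbCount_eq_card, Nat.card_eq_fintype_card, Fintype.card_fin] using
    card_unbordered_succ_le (α := Fin σ) n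

theorem unbCount_le_pow_mul (σ : ℕ) {i n : ℕ} (hin : i ≤ n) :
    unbCount σ n ≤ σ ^ (n - i) * unbCount σ i := by
  induction n, hin using Nat.le_induction with
  | base => simp
  | succ n hin ih =>
    calc unbCount σ (n + 1) ≤ σ * unbCount σ n := unbCount_succ_le σ n
      _ ≤ σ * (σ ^ (n - i) * unbCount σ i) := Nat.mul_le_mul_left σ ih
      _ = σ ^ (n + 1 - i) * unbCount σ i := by
        rw [← mul_assoc, ← pow_succ', Nat.sub_add_comm hin]

theorem unbCount_le_pow (σ n : ℕ) : unbCount σ n ≤ σ ^ n :=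
  calc unbCount σ n ≤ Nat.card (Fin n → Fin σ) := Finite.card_subtype_le _
    _ = σ ^ n := by simp

theorem unbCount_mul_inv_pow_le (σ : ℕ) {i n : ℕ} (hin : i ≤ n) :
    (unbCount σ n : ℝ) * (σ : ℝ)⁻¹ ^ (n - i) ≤ unbCount σ i := by
  calc (unbCount σ n : ℝ) * (σ : ℝ)⁻¹ ^ (n - i)
      ≤ (σ : ℝ) ^ (n - i) * unbCount σ i * (σ : ℝ)⁻¹ ^ (n - i) := by
        gcongr; exact_mod_cast unbCount_le_pow_mul σ hin
    _ = ((σ : ℝ) * (σ : ℝ)⁻¹) ^ (n - i) * unbCount σ i := by ring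
    _ ≤ unbCount σ i := by
        refine mul_le_of_le_one_left (Nat.cast_nonneg _) (pow_le_one₀ ?_ ?_)
        · positivity
        · exact mul_inv_le_one

theorem sub_le_sum_range_sub_mul_pow {x : ℝ} (hx0 : 0 ≤ x) (hx1 : x < 1) {n N : ℕ}
    (hn : n ≤ 2 * N) :
    n / (1 - x) - 2 * (x / (1 - x) ^ 2) ≤ ∑ j ∈ range N, ((n : ℝ) - j) * x ^ j := by
  have hxnorm : ‖x‖ < 1 := by rwa [Real.norm_of_nonneg hx0]
  set f : ℕ → ℝ := fun j => if j < N then ((n : ℝ) - j) * x ^ j else 0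
  have hf : Summable f := summable_of_ne_finset_zero (s := range N) fun j hj => by
    simp [f, Finset.mem_range.not.mp hj]
  have hjx : Summable fun j : ℕ => (j : ℝ) * x ^ j := by
    simpa using summable_pow_mul_geometric_of_norm_lt_one 1 hxnorm
  have hpoint (j : ℕ) : (n : ℝ) * x ^ j ≤ f j + 2 * ((j : ℝ) * x ^ j) := by
    have hxj : 0 ≤ x ^ j := pow_nonneg hx0 j
    by_cases hj : j < N
    · simp only [f, if_pos hj]; nlinarith [(j.cast_nonneg : (0 : ℝ) ≤ j)]
    · have : (n : ℝ) ≤ 2 * j := by exact_mod_cast (by omega : n ≤ 2 * j)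
      simp only [f, if_neg hj]; nlinarith
  calc n / (1 - x) - 2 * (x / (1 - x) ^ 2)
      = ∑' j, (n : ℝ) * x ^ j - 2 * ∑' j : ℕ, (j : ℝ) * x ^ j := by
        rw [tsum_mul_left, tsum_geometric_of_lt_one hx0 hx1,
          tsum_coe_mul_geometric_of_norm_lt_one hxnorm, div_eq_mul_inv]
    _ ≤ ∑' j, f j := by
        rw [sub_le_iff_le_add, ← tsum_mul_left, ← hf.tsum_add (hjx.mul_left 2)]
        exact (summable_geometric_of_lt_one hx0 hx1).mul_left _ |>.tsum_le_tsum hpoint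
          (hf.add (hjx.mul_left 2))
    _ = ∑ j ∈ range N, ((n : ℝ) - j) * x ^ j := by
        rw [tsum_eq_sum (s := range N) fun j hj => by simp [f, Finset.mem_range.not.mp hj]]
        exact sum_congr rfl fun j hj => if_pos (Finset.mem_range.mp hj)

theorem unbCount_mul_sum_le_sum (σ : ℕ) {m n : ℕ} (hmn : m ≤ n) :
    (unbCount σ n : ℝ) * ∑ j ∈ range (n - m + 1), ((n : ℝ) - j) * (σ : ℝ)⁻¹ ^ j ≤
      ∑ i ∈ Icc m n, (i : ℝ) * unbCount σ i := by
  have hreindex : ∑ j ∈ range (n - m + 1), ((n : ℝ) - j) * (σ : ℝ)⁻¹ ^ j =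
      ∑ i ∈ Icc m n, (i : ℝ) * (σ : ℝ)⁻¹ ^ (n - i) := by
    refine sum_nbij' (n - ·) (n - ·) ?_ ?_ ?_ ?_ ?_ <;> intro j hj <;>
      simp only [Finset.mem_range, Finset.mem_Icc] at hj ⊢
    · omega
    · omega
    · omega
    · omega
    · rw [Nat.sub_sub_self (by omega), Nat.cast_sub (by omega)]
  rw [hreindex, mul_sum]
  refine Finset.sum_le_sum fun i hi => ?_
  calc (unbCount σ n : ℝ) * ((i : ℝ) * (σ : ℝ)⁻¹ ^ (n - i))
      = i * ((unbCount σ n : ℝ) * (σ : ℝ)⁻¹ ^ (n - i)) := by ring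
    _ ≤ i * unbCount σ i := by
        gcongr; exact unbCount_mul_inv_pow_le σ (mem_Icc.mp hi).2

theorem weighted_unbCount_sum_lower_bound (σ : ℕ) (hσ : 2 ≤ σ) :
    ∃ C : ℝ, 0 < C ∧ ∀ n : ℕ, 2 ≤ n →
      ∑ i ∈ Finset.Icc ((n + 1) / 2) n, (i : ℝ) * (unbCount σ i : ℝ) ≥
        (n : ℝ) * (σ : ℝ) / ((σ : ℝ) - 1) * (unbCount σ n : ℝ) - C * (σ : ℝ) ^ n := by
  refine ⟨4, by norm_num, fun n _ => ?_⟩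
  have hσ2 : (2 : ℝ) ≤ σ := by exact_mod_cast hσ
  set x : ℝ := (σ : ℝ)⁻¹
  have hx0 : 0 ≤ x := by positivity
  have hx : x ≤ 1 / 2 := by rw [one_div]; exact inv_anti₀ two_pos hσ2
  have hgeom := sub_le_sum_range_sub_mul_pow hx0 (by linarith)
    (by omega : n ≤ 2 * (n - (n + 1) / 2 + 1))
  have hfrac : n / (1 - x) = n * σ / (σ - 1) := by
    rw [show 1 - x = (σ - 1) / σ by simp only [x]; field_simp, div_div_eq_mul_div]
  have herr : 2 * (x / (1 - x) ^ 2) ≤ 4 := by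
    have : x / (1 - x) ^ 2 ≤ (1 / 2) / (1 - 1 / 2) ^ 2 := by gcongr
    linarith
  have hcount := unbCount_mul_sum_le_sum σ (by omega : (n + 1) / 2 ≤ n)
  have hpow : (unbCount σ n : ℝ) ≤ σ ^ n := by exact_mod_cast unbCount_le_pow σ n
  calc n * σ / (σ - 1) * (unbCount σ n : ℝ) - 4 * σ ^ n
      ≤ unbCount σ n * (n / (1 - x) - 4) := by rw [hfrac]; nlinarith
    _ ≤ unbCount σ n * ∑ j ∈ range (n - (n + 1) / 2 + 1), ((n : ℝ) - j) * x ^ j := by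
        gcongr; linarith
    _ ≤ _ := hcount
end

section
/- Fix an integer σ ≥ 3. There exists a constant C > 0 (depending only on σ) such that for all n ≥ 4, Σ_{i=⌈n/2⌉}^{n−2} Σ_{j=1}^{n−i−1} 2^{j−1} · i · ((σ−1)^{j+1}·σ^{i−j−1} − σ^{i−2}) ≥ n·( (σ^n − σ^{n−1})/(σ² − 2σ + 2) − σ^{n−2}/((σ−1)(σ−2)) ) − C·σ^n. -/
open Finset

/-!
Put `x = σ` and `k = n - i`. After factoring out `xⁿ`, row `i` of the double sum is `i · r(k)`
with `r = rowSum x`, a combination of the geometric sequences `(2(x-1)/x²)ᵏ`, `x⁻ᵏ` and `(2/x)ᵏ`,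
all of ratio `< 1` once `x > 2`; the series `∑ r(k)` sums to the bracket on the right-hand side.
As `i = n - k` with `k ≤ n/2`, the double sum is `xⁿ ∑_{k ≤ n/2} (n - k) r(k)`, which falls short
of `n xⁿ ∑ r(k)` by at most `2 xⁿ ∑ k |r(k)|`: the terms with `k ≤ n/2` lose `k r(k)`, the others
lose `n r(k)` with `n ≤ 2k`. This last series converges because `|r(k)| ≤ k (2/x)ᵏ`.
-/

lemma sum_Icc_two_pow_mul_pow_sub {K : Type*} [Field K] (c d : K) (hc : 2 * c ≠ 1) (m : ℕ) :
    ∑ j ∈ Icc 1 m, 2 ^ (j - 1) * (c ^ (j + 1) - d) =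
      c ^ 2 * ((2 * c) ^ m - 1) / (2 * c - 1) - (2 ^ m - 1) * d := by
  induction m with
  | zero => simp
  | succ m ih =>
    have : 2 * c - 1 ≠ 0 := sub_ne_zero.mpr hc
    rw [sum_Icc_succ_top (by omega), ih, Nat.add_sub_cancel, div_sub' this, div_add' _ _ _ this,
      div_sub' this]
    ring

lemma sub_le_sum_range_sub_mul {f : ℕ → ℝ} {G : ℝ} (hf : HasSum f G)
    (hs : Summable fun k : ℕ => (k : ℝ) * |f k|) {n K : ℕ} (hn : n ≤ 2 * (K + 1)) :
    n * G - 2 * ∑' k : ℕ, (k : ℝ) * |f k| ≤ ∑ k ∈ range (K + 1), ((n : ℝ) - k) * f k := by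
  have hfin : HasSum (fun k => if k ∈ range (K + 1) then ((n : ℝ) - k) * f k else 0)
      (∑ k ∈ range (K + 1), ((n : ℝ) - k) * f k) := by
    have := hasSum_sum_of_ne_finset_zero (L := SummationFilter.unconditional ℕ)
      (f := fun k => if k ∈ range (K + 1) then ((n : ℝ) - k) * f k else 0)
      fun k hk => if_neg hk
    simpa only [sum_ite_mem, inter_self] using this
  suffices h : ∀ k, n * f k - (if k ∈ range (K + 1) then ((n : ℝ) - k) * f k else 0) ≤
      2 * (k * |f k|) by
    linarith [hasSum_le h ((hf.mul_left (n : ℝ)).sub hfin) (hs.hasSum.mul_left 2)]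
  intro k
  have hk0 : (0 : ℝ) ≤ k := k.cast_nonneg
  split_ifs with hk
  · calc (n : ℝ) * f k - (n - k) * f k = k * f k := by ring
      _ ≤ k * |f k| := mul_le_mul_of_nonneg_left (le_abs_self _) hk0
      _ ≤ 2 * (k * |f k|) := by linarith [mul_nonneg hk0 (abs_nonneg (f k))]
  · have hnk : (n : ℝ) ≤ 2 * k := by
      rw [mem_range, not_lt] at hk; exact_mod_cast (by omega : n ≤ 2 * k)
    calc (n : ℝ) * f k - 0 ≤ n * |f k| := by
          rw [sub_zero]; exact mul_le_mul_of_nonneg_left (le_abs_self _) n.cast_nonneg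
      _ ≤ 2 * (k * |f k|) := by
          rw [← mul_assoc]; exact mul_le_mul_of_nonneg_right hnk (abs_nonneg _)

lemma sum_Icc_half_reflect (F : ℕ → ℝ) {n : ℕ} (hn : 2 ≤ n) :
    ∑ i ∈ Icc ((n + 1) / 2) (n - 2), (i : ℝ) * F (n - i) =
      ∑ k ∈ Icc 2 (n / 2), ((n : ℝ) - k) * F k := by
  refine sum_nbij' (n - ·) (n - ·) ?_ ?_ ?_ ?_ ?_ <;> simp only [mem_Icc]
  · intro i hi; omega
  · intro k hk; omega
  · intro i hi; omega
  · intro k hk; omega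
  · intro i hi
    rw [Nat.cast_sub (by omega : i ≤ n)]
    ring

noncomputable def rowSum (x : ℝ) (k : ℕ) : ℝ :=
  (∑ j ∈ Icc 1 (k - 1), 2 ^ (j - 1) * (((x - 1) / x) ^ (j + 1) - 1 / x ^ 2)) / x ^ k

section

variable {x : ℝ}

lemma rowSum_of_le_one {k : ℕ} (hk : k ≤ 1) : rowSum x k = 0 := by
  simp [rowSum, Nat.sub_eq_zero_of_le hk]

lemma rowSum_succ (hx0 : x ≠ 0) (hx2 : x ≠ 2) (m : ℕ) :
    rowSum x (m + 1) =
      (x - 1) ^ 2 / (x ^ 2 * (x - 2)) * ((2 * (x - 1) / x ^ 2) ^ m - (1 / x) ^ m) -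
        1 / x ^ 3 * ((2 / x) ^ m - (1 / x) ^ m) := by
  have hx2' : x - 2 ≠ 0 := sub_ne_zero.mpr hx2
  have hc : 2 * ((x - 1) / x) - 1 = (x - 2) / x := by field_simp; ring
  have h2c : 2 * ((x - 1) / x) ≠ 1 := by
    rw [← sub_ne_zero, hc]; exact div_ne_zero hx2' hx0
  rw [rowSum, Nat.add_sub_cancel, sum_Icc_two_pow_mul_pow_sub _ _ h2c, hc]
  simp only [mul_div_assoc', div_pow, one_pow]
  field_simp
  ring

lemma sum_Icc_eq_pow_mul_rowSum (hx : x ≠ 0) {n i : ℕ} (h2 : 2 ≤ i) (hni : n ≤ 2 * i)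
    (hin : i ≤ n) (t : ℝ) :
    ∑ j ∈ Icc 1 (n - i - 1),
        2 ^ (j - 1) * t * ((x - 1) ^ (j + 1) * x ^ (i - j - 1) - x ^ (i - 2)) =
      x ^ n * (t * rowSum x (n - i)) := by
  have hxn : x ^ n = x ^ i * x ^ (n - i) := by rw [← pow_add]; congr; omega
  calc _ = ∑ j ∈ Icc 1 (n - i - 1),
        x ^ i * (t * (2 ^ (j - 1) * (((x - 1) / x) ^ (j + 1) - 1 / x ^ 2))) := by
        refine sum_congr rfl fun j hj => ?_
        have hj := (mem_Icc.mp hj).2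
        rw [Nat.sub_sub, pow_sub₀ _ hx (by omega), pow_sub₀ _ hx h2, div_pow]
        field_simp
    _ = _ := by
        rw [← mul_sum, ← mul_sum, rowSum, hxn]
        field_simp

lemma abs_rowSum_le (hx : 1 ≤ x) (k : ℕ) : |rowSum x k| ≤ k * (2 / x) ^ k := by
  have hx0 : 0 < x := by linarith
  have hterm : ∀ j ∈ Icc 1 (k - 1),
      |2 ^ (j - 1) * (((x - 1) / x) ^ (j + 1) - 1 / x ^ 2)| ≤ 2 ^ k := by
    intro j hj
    have hc0 : 0 ≤ (x - 1) / x := div_nonneg (by linarith) hx0.le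
    have hc1 : (x - 1) / x ≤ 1 := (div_le_one hx0).mpr (by linarith)
    have hd : 1 / x ^ 2 ≤ 1 := by rw [div_le_one (by positivity)]; nlinarith
    rw [abs_mul, abs_of_pos (by positivity), ← mul_one ((2 : ℝ) ^ k)]
    gcongr
    · norm_num
    · have := (mem_Icc.mp hj).2; omega
    · exact abs_sub_le_of_nonneg_of_le (by positivity) (pow_le_one₀ hc0 hc1) (by positivity) hd
  rw [rowSum, abs_div, abs_of_pos (pow_pos hx0 k), div_pow, ← mul_div_assoc]
  gcongr
  calc _ ≤ ∑ j ∈ Icc 1 (k - 1), |2 ^ (j - 1) * (((x - 1) / x) ^ (j + 1) - 1 / x ^ 2)| :=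
        abs_sum_le_sum_abs _ _
    _ ≤ ∑ j ∈ Icc 1 (k - 1), (2 : ℝ) ^ k := sum_le_sum hterm
    _ ≤ k * 2 ^ k := by
        rw [sum_const, nsmul_eq_mul, Nat.card_Icc]
        gcongr
        exact_mod_cast (by omega : k - 1 + 1 - 1 ≤ k)

lemma summable_natCast_mul_abs_rowSum (hx : 2 < x) :
    Summable fun k : ℕ => (k : ℝ) * |rowSum x k| := by
  have hq : ‖2 / x‖ < 1 := by
    rw [Real.norm_eq_abs, abs_of_pos (by positivity), div_lt_one (by linarith)]; exact hx
  refine (summable_pow_mul_geometric_of_norm_lt_one 2 hq).of_nonneg_of_le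
    (fun k => by positivity) fun k => ?_
  calc (k : ℝ) * |rowSum x k| ≤ k * (k * (2 / x) ^ k) := by
        gcongr; exact abs_rowSum_le (by linarith) k
    _ = (k : ℝ) ^ 2 * (2 / x) ^ k := by ring

lemma hasSum_rowSum (hx : 2 < x) :
    HasSum (rowSum x) ((x - 1) / (x * (x ^ 2 - 2 * x + 2)) - 1 / (x ^ 2 * (x - 1) * (x - 2))) := by
  have hx0 : 0 < x := by linarith
  have hρ := hasSum_geometric_of_lt_one (r := 2 * (x - 1) / x ^ 2)
    (div_nonneg (by linarith) (by positivity)) (by rw [div_lt_one (by positivity)]; nlinarith)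
  have h1 := hasSum_geometric_of_lt_one (r := 1 / x) (by positivity)
    (by rw [div_lt_one hx0]; linarith)
  have h2 := hasSum_geometric_of_lt_one (r := 2 / x) (by positivity)
    (by rw [div_lt_one hx0]; linarith)
  rw [← hasSum_nat_add_iff' 1, sum_range_one, rowSum_of_le_one zero_le_one, sub_zero]
  simp_rw [rowSum_succ hx0.ne' (by linarith : x ≠ 2)]
  convert ((hρ.sub h1).mul_left ((x - 1) ^ 2 / (x ^ 2 * (x - 2)))).sub
    ((h2.sub h1).mul_left (1 / x ^ 3)) using 1
  have hx1 : x - 1 ≠ 0 := by linarith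
  have hx2 : x - 2 ≠ 0 := by linarith
  have hq : x * (x - 2) + 2 ≠ 0 := by nlinarith
  simp only [one_sub_div hx0.ne', one_sub_div (pow_ne_zero 2 hx0.ne'), inv_div,
    show x ^ 2 - 2 * (x - 1) = x ^ 2 - 2 * x + 2 by ring]
  field_simp
  ring

lemma sum_Icc_two_mul_rowSum (F : ℕ → ℝ) (K : ℕ) :
    ∑ k ∈ Icc 2 K, F k * rowSum x k = ∑ k ∈ range (K + 1), F k * rowSum x k := by
  refine sum_subset (fun k hk => ?_) fun k hk hk' => ?_
  · simp only [mem_Icc, mem_range] at hk ⊢; omega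
  · rw [rowSum_of_le_one (by simp only [mem_Icc, mem_range] at hk hk'; omega), mul_zero]

end

theorem double_sum_lower_bound (σ : ℕ) (hσ : 3 ≤ σ) :
    ∃ C : ℝ, 0 < C ∧ ∀ n : ℕ, 4 ≤ n →
      ∑ i ∈ Finset.Icc ((n + 1) / 2) (n - 2), ∑ j ∈ Finset.Icc 1 (n - i - 1),
          (2 : ℝ) ^ (j - 1) * (i : ℝ) *
            (((σ : ℝ) - 1) ^ (j + 1) * (σ : ℝ) ^ (i - j - 1) - (σ : ℝ) ^ (i - 2)) ≥
        (n : ℝ) * (((σ : ℝ) ^ n - (σ : ℝ) ^ (n - 1)) / ((σ : ℝ) ^ 2 - 2 * (σ : ℝ) + 2) -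
            (σ : ℝ) ^ (n - 2) / (((σ : ℝ) - 1) * ((σ : ℝ) - 2))) - C * (σ : ℝ) ^ n := by
  have hx : (2 : ℝ) < σ := by exact_mod_cast hσ
  have hσ0 : (σ : ℝ) ≠ 0 := by positivity
  have hσ1 : (σ : ℝ) - 1 ≠ 0 := by linarith
  have hσ2 : (σ : ℝ) - 2 ≠ 0 := by linarith
  set M := ∑' k : ℕ, (k : ℝ) * |rowSum σ k|
  have hM : 0 ≤ M := tsum_nonneg fun k => by positivity
  refine ⟨2 * M + 1, by positivity, fun n hn => ?_⟩
  rw [ge_iff_le, sum_congr rfl fun i hi => by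
      obtain ⟨hi1, hi2⟩ := mem_Icc.mp hi
      exact sum_Icc_eq_pow_mul_rowSum hσ0 (by omega) (by omega) (by omega) _,
    ← mul_sum, sum_Icc_half_reflect _ (by omega), sum_Icc_two_mul_rowSum,
    pow_sub₀ _ hσ0 (by omega : 1 ≤ n), pow_sub₀ _ hσ0 (by omega : 2 ≤ n)]
  calc _ = (σ : ℝ) ^ n * (n * ((σ - 1) / (σ * (σ ^ 2 - 2 * σ + 2)) -
        1 / (σ ^ 2 * (σ - 1) * (σ - 2))) - (2 * M + 1)) := by
        field_simp
    _ ≤ _ := by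
        gcongr
        linarith [sub_le_sum_range_sub_mul (hasSum_rowSum hx)
          (summable_natCast_mul_abs_rowSum hx) (n := n) (K := n / 2) (by omega)]
end
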